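/- arXiv:2501.13771 — 5 statements merged into one kernel-verified Lean document; each statement's English description precedes it below -/
import Mathlib

section
/- Let 0 < s < 1 and let m₁, m₂ ∈ ℕ. Then there exists a constant C > 0 (depending only on s, m₁, m₂) such that for all ξ, η ∈ ℝ with ξ ≠ 0, η ≠ 0 and |ξ − η| ≤ |η|/2: |∂_ξ^{m₁} ∂_η^{m₂} M(ξ,η)| ≤ C · (|ξ| + |η|)^{2s − m₁ − m₂}. -/
open MeasureTheory Real

/-- `M(ξ,η) = ∫₀¹ |(ξ−η)τ + η|^{2s} dτ`. -/
noncomputable def Mker (s ξ η : ℝ) : ℝ := ∫ τ in (0:ℝ)..1, |(ξ - η) * τ + η| ^ (2 * s)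

namespace Stmt7Aux
open Filter Topology


noncomputable def cc (s : ℝ) (m : ℕ) : ℝ := ∏ k ∈ Finset.range m, (2*s - k)

noncomputable def Dm (s : ℝ) (m : ℕ) (x : ℝ) : ℝ :=
  cc s m * Real.sign x ^ m * |x| ^ (2*s - m)

lemma cc_succ (s : ℝ) (m : ℕ) : cc s (m+1) = cc s m * (2*s - m) :=
  Finset.prod_range_succ _ _

lemma cast_succ_exp (s : ℝ) (m : ℕ) : 2*s - ((m+1 : ℕ) : ℝ) = 2*s - m - 1 := by
  push_cast; ring

lemma Dm_hasDerivAt (s : ℝ) (m : ℕ) {x : ℝ} (hx : x ≠ 0) :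
    HasDerivAt (Dm s m) (Dm s (m+1) x) x := by
  rcases hx.lt_or_gt with h | h
  · -- x < 0
    have hps : -x ≠ 0 := by intro h'; apply hx; linarith [neg_eq_zero.mp h']
    have h1 : HasDerivAt (fun y : ℝ => (-y) ^ (2*s - m))
        ((2*s - m) * (-x) ^ (2*s - m - 1) * (-1)) x :=
      (Real.hasDerivAt_rpow_const (p := 2*s - m) (Or.inl hps)).comp x (hasDerivAt_neg x)
    have h2 := h1.const_mul (cc s m * (-1:ℝ) ^ m)
    have hev : Dm s m =ᶠ[𝓝 x]
        fun y => cc s m * (-1:ℝ) ^ m * ((-y) ^ (2*s - m)) := by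
      filter_upwards [Iio_mem_nhds h] with y hy
      simp only [Dm, Real.sign_of_neg (Set.mem_Iio.mp hy), abs_of_neg (Set.mem_Iio.mp hy)]
    have h3 : HasDerivAt (Dm s m)
        (cc s m * (-1:ℝ)^m * ((2*s-m)*(-x)^(2*s-m-1)*(-1))) x :=
      HasDerivAt.congr_of_eventuallyEq h2 hev
    convert h3 using 1
    rw [Dm, cc_succ, Real.sign_of_neg h, abs_of_neg h, cast_succ_exp, pow_succ]
    ring
  · -- 0 < x
    have h1 : HasDerivAt (fun y : ℝ => y ^ (2*s - m))
        ((2*s - m) * x ^ (2*s - m - 1)) x :=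
      Real.hasDerivAt_rpow_const (p := 2*s - m) (Or.inl hx)
    have h2 := h1.const_mul (cc s m)
    have hev : Dm s m =ᶠ[𝓝 x] fun y => cc s m * (y ^ (2*s - m)) := by
      filter_upwards [Ioi_mem_nhds h] with y hy
      simp only [Dm, Real.sign_of_pos (Set.mem_Ioi.mp hy), abs_of_pos (Set.mem_Ioi.mp hy), one_pow, mul_one]
    have h3 : HasDerivAt (Dm s m) (cc s m * ((2*s-m)*x^(2*s-m-1))) x :=
      HasDerivAt.congr_of_eventuallyEq h2 hev
    convert h3 using 1
    rw [Dm, cc_succ, Real.sign_of_pos h, abs_of_pos h, cast_succ_exp, one_pow]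
    ring

lemma Dm_continuousAt (s : ℝ) (m : ℕ) {x : ℝ} (hx : x ≠ 0) :
    ContinuousAt (Dm s m) x :=
  (Dm_hasDerivAt s m hx).differentiableAt.continuousAt

lemma Dm_abs (s : ℝ) (m : ℕ) {x : ℝ} (hx : x ≠ 0) :
    |Dm s m x| = |cc s m| * |x| ^ (2*s - m) := by
  rw [Dm, abs_mul, abs_mul, abs_pow]
  rcases Real.sign_apply_eq_of_ne_zero x hx with h | h <;>
    simp [h, abs_of_nonneg (Real.rpow_nonneg (abs_nonneg x) _)]

lemma pert_lower {A B c : ℝ} (h1 : c ≤ |A|) (h2 : |B| ≤ c/2) : c/2 ≤ |A + B| := by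
  have h3 : |A| ≤ |A + B| + |B| := by
    calc |A| = |(A + B) + (-B)| := by ring_nf
    _ ≤ |A + B| + |(-B)| := abs_add_le _ _
    _ = |A + B| + |B| := by rw [abs_neg]
  linarith

lemma seg_abs_le {ξ η τ : ℝ} (hτ : τ ∈ Set.Icc (0:ℝ) 1) : |(ξ-η)*τ+η| ≤ |ξ| + |η| := by
  obtain ⟨h0, h1⟩ := hτ
  have : (ξ-η)*τ+η = ξ*τ + η*(1-τ) := by ring
  rw [this]
  have hab : |ξ*τ + η*(1-τ)| ≤ |ξ*τ| + |η*(1-τ)| := abs_add_le _ _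
  have e1 : |ξ*τ| = |ξ| * τ := by rw [abs_mul, abs_of_nonneg h0]
  have e2 : |η*(1-τ)| = |η| * (1-τ) := by
    rw [abs_mul, abs_of_nonneg (by linarith : (0:ℝ) ≤ 1-τ)]
  nlinarith [abs_nonneg ξ, abs_nonneg η]

/-- bound for `Dm` given two-sided bounds on `|x|`. -/
lemma Dm_le (s : ℝ) (m : ℕ) {x c A : ℝ} (hc : 0 < c) (h1 : c ≤ |x|) (h2 : |x| ≤ A) :
    |Dm s m x| ≤ |cc s m| * (c ^ (2*s - m) + A ^ (2*s - m)) := by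
  have hx : x ≠ 0 := by intro h; rw [h, abs_zero] at h1; linarith
  rw [Dm_abs s m hx]
  have key : |x| ^ (2*s - m) ≤ c ^ (2*s - m) + A ^ (2*s - m) := by
    rcases le_or_gt 0 (2*s - m) with he | he
    · have := Real.rpow_le_rpow (abs_nonneg x) h2 he
      have h0 : (0:ℝ) ≤ c ^ (2*s - m) := Real.rpow_nonneg hc.le _
      linarith
    · have := Real.rpow_le_rpow_of_nonpos hc h1 he.le
      have h0 : (0:ℝ) ≤ A ^ (2*s - m) := Real.rpow_nonneg (hc.le.trans (h1.trans h2)) _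
      linarith
  exact mul_le_mul_of_nonneg_left key (abs_nonneg _)

noncomputable def K (s : ℝ) (a b : ℕ) (ξ η : ℝ) : ℝ :=
  ∫ τ in (0:ℝ)..1, τ^a * (1-τ)^b * Dm s (a+b) ((ξ-η)*τ+η)

lemma contOn (s : ℝ) (m a b : ℕ) {ξ η c : ℝ} (hc : 0 < c)
    (h : ∀ τ ∈ Set.Icc (0:ℝ) 1, c ≤ |(ξ-η)*τ+η|) :
    ContinuousOn (fun τ => τ^a * (1-τ)^b * Dm s m ((ξ-η)*τ+η)) (Set.Icc 0 1) := by
  intro τ hτ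
  have hne : (ξ-η)*τ+η ≠ 0 := by
    intro h0; have := h τ hτ; rw [h0, abs_zero] at this; linarith
  have hcont : ContinuousAt (fun τ : ℝ => (ξ-η)*τ+η) τ := by fun_prop
  have h1 : ContinuousAt (fun τ : ℝ => τ^a * (1-τ)^b) τ := by fun_prop
  exact (h1.mul (ContinuousAt.comp (x := τ) (Dm_continuousAt s m hne) hcont)).continuousWithinAt

lemma uIoc_subset_Icc : Set.uIoc (0:ℝ) 1 ⊆ Set.Icc 0 1 := by
  rw [Set.uIoc_of_le (by norm_num : (0:ℝ) ≤ 1)]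
  exact Set.Ioc_subset_Icc_self

lemma hasDerivAt_K_eta (s : ℝ) (a b : ℕ) {ξ η c : ℝ} (hc : 0 < c)
    (h : ∀ τ ∈ Set.Icc (0:ℝ) 1, c ≤ |(ξ-η)*τ+η|) :
    HasDerivAt (fun η' => K s a b ξ η') (K s a (b+1) ξ η) η := by
  -- lower/upper bounds for perturbed segment
  have hseg : ∀ η' ∈ Metric.ball η (c/2), ∀ τ ∈ Set.Icc (0:ℝ) 1,
      c/2 ≤ |(ξ-η')*τ+η'| ∧ |(ξ-η')*τ+η'| ≤ |ξ| + |η| + c := by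
    intro η' hη' τ hτ
    have hd : |η'-η| < c/2 := by rwa [Metric.mem_ball, Real.dist_eq] at hη'
    have hB : |(η'-η)*(1-τ)| ≤ c/2 := by
      rw [abs_mul]
      have h1 : |1-τ| ≤ 1 := by
        rw [abs_le]; constructor <;> [linarith [hτ.2]; linarith [hτ.1]]
      nlinarith [abs_nonneg (η'-η)]
    have he : (ξ-η')*τ+η' = ((ξ-η)*τ+η) + (η'-η)*(1-τ) := by ring
    constructor
    · rw [he]; exact pert_lower (h τ hτ) hB
    · rw [he]
      calc |((ξ-η)*τ+η) + (η'-η)*(1-τ)| ≤ |(ξ-η)*τ+η| + |(η'-η)*(1-τ)| := abs_add_le _ _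
      _ ≤ (|ξ| + |η|) + c := by
          have := seg_abs_le (ξ := ξ) (η := η) hτ
          linarith
      _ = |ξ| + |η| + c := by ring
  set m := a + b with hm
  set B : ℝ := |cc s (m+1)| * ((c/2) ^ (2*s - (m+1:ℕ)) + (|ξ| + |η| + c) ^ (2*s - (m+1:ℕ)))
    with hB
  have hmain := intervalIntegral.hasDerivAt_integral_of_dominated_loc_of_deriv_le
    (μ := volume) (a := (0:ℝ)) (b := 1) (x₀ := η)
    (F := fun η' τ => τ^a * (1-τ)^b * Dm s m ((ξ-η')*τ+η'))
    (F' := fun η' τ => τ^a * (1-τ)^(b+1) * Dm s (m+1) ((ξ-η')*τ+η'))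
    (bound := fun _ => B) (Metric.ball_mem_nhds _ (half_pos hc))
    (by -- hF_meas
      filter_upwards [Metric.ball_mem_nhds η (half_pos hc)] with η' hη'
      exact ((contOn s m a b (half_pos hc)
        (fun τ hτ => (hseg η' hη' τ hτ).1)).mono uIoc_subset_Icc).aestronglyMeasurable
        measurableSet_uIoc)
    (by -- hF_int
      apply ContinuousOn.intervalIntegrable
      rw [Set.uIcc_of_le (by norm_num : (0:ℝ) ≤ 1)]
      exact contOn s m a b hc h)
    (by -- hF'_meas
      exact ((contOn s (m+1) a (b+1) hc h).mono uIoc_subset_Icc).aestronglyMeasurable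
        measurableSet_uIoc)
    (by -- h_bound
      apply ae_of_all
      intro τ hτ η' hη'
      have hτ' : τ ∈ Set.Icc (0:ℝ) 1 := uIoc_subset_Icc hτ
      obtain ⟨hlo, hhi⟩ := hseg η' hη' τ hτ'
      have hd := Dm_le s (m+1) (half_pos hc) hlo hhi
      have h1 : |τ^a * (1-τ)^(b+1)| ≤ 1 := by
        rw [abs_mul, abs_pow, abs_pow]
        have ht1 : |τ| ≤ 1 := by rw [abs_le]; exact ⟨by linarith [hτ'.1], hτ'.2⟩
        have h2 : |1-τ| ≤ 1 := by
          rw [abs_le]; exact ⟨by linarith [hτ'.2], by linarith [hτ'.1]⟩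
        have hmm : |τ|^a * |1-τ|^(b+1) ≤ 1*1 :=
          mul_le_mul (pow_le_one₀ (abs_nonneg _) ht1)
            (pow_le_one₀ (abs_nonneg _) h2) (pow_nonneg (abs_nonneg _) _)
            (by norm_num : (0:ℝ) ≤ 1)
        simpa using hmm
      rw [Real.norm_eq_abs, abs_mul]
      have := mul_le_mul h1 hd (abs_nonneg _) (by norm_num : (0:ℝ) ≤ 1)
      rw [one_mul] at this
      exact this) 
    (by -- bound_integrable
      exact intervalIntegrable_const)
    (by -- h_diff
      apply ae_of_all
      intro τ hτ η' hη'
      have hτ' : τ ∈ Set.Icc (0:ℝ) 1 := uIoc_subset_Icc hτ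
      have hne : (ξ-η')*τ+η' ≠ 0 := by
        intro h0
        have := (hseg η' hη' τ hτ').1
        rw [h0, abs_zero] at this; linarith
      have hinner : HasDerivAt (fun y => (ξ-y)*τ+y) (1-τ) η' := by
        have he : (fun y : ℝ => (ξ-y)*τ+y) = fun y => y*(1-τ) + ξ*τ := by
          funext y; ring
        rw [he]
        simpa using ((hasDerivAt_id η').mul_const (1-τ)).add_const (ξ*τ)
      have houter := Dm_hasDerivAt s m hne
      have hcomp : HasDerivAt (fun y => Dm s m ((ξ-y)*τ+y))
          (Dm s (m+1) ((ξ-η')*τ+η') * (1-τ)) η' :=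
        HasDerivAt.comp (h := fun y => (ξ-y)*τ+y) (x := η') houter hinner
      have hfin := hcomp.const_mul (τ^a * (1-τ)^b)
      show HasDerivAt _ (τ^a * (1-τ)^(b+1) * Dm s (m+1) ((ξ-η')*τ+η')) η'
      refine hfin.congr_deriv ?_
      rw [pow_succ]; ring)
  exact hmain.2

lemma hasDerivAt_K_xi (s : ℝ) (a b : ℕ) {ξ η c : ℝ} (hc : 0 < c)
    (h : ∀ τ ∈ Set.Icc (0:ℝ) 1, c ≤ |(ξ-η)*τ+η|) :
    HasDerivAt (fun ξ' => K s a b ξ' η) (K s (a+1) b ξ η) ξ := by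
  have hseg : ∀ ξ' ∈ Metric.ball ξ (c/2), ∀ τ ∈ Set.Icc (0:ℝ) 1,
      c/2 ≤ |(ξ'-η)*τ+η| ∧ |(ξ'-η)*τ+η| ≤ |ξ| + |η| + c := by
    intro ξ' hξ' τ hτ
    have hd : |ξ'-ξ| < c/2 := by rwa [Metric.mem_ball, Real.dist_eq] at hξ'
    have hB : |(ξ'-ξ)*τ| ≤ c/2 := by
      rw [abs_mul]
      have h1 : |τ| ≤ 1 := by rw [abs_le]; exact ⟨by linarith [hτ.1], hτ.2⟩
      nlinarith [abs_nonneg (ξ'-ξ)]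
    have he : (ξ'-η)*τ+η = ((ξ-η)*τ+η) + (ξ'-ξ)*τ := by ring
    refine ⟨by rw [he]; exact pert_lower (h τ hτ) hB, ?_⟩
    rw [he]
    calc |((ξ-η)*τ+η) + (ξ'-ξ)*τ| ≤ |(ξ-η)*τ+η| + |(ξ'-ξ)*τ| := abs_add_le _ _
    _ ≤ (|ξ| + |η|) + c := by
        have := seg_abs_le (ξ := ξ) (η := η) hτ
        linarith
    _ = |ξ| + |η| + c := by ring
  set m := a + b with hm
  set B : ℝ := |cc s (m+1)| * ((c/2) ^ (2*s - (m+1:ℕ)) + (|ξ| + |η| + c) ^ (2*s - (m+1:ℕ)))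
    with hB
  have hmain := intervalIntegral.hasDerivAt_integral_of_dominated_loc_of_deriv_le
    (μ := volume) (a := (0:ℝ)) (b := 1) (x₀ := ξ)
    (F := fun ξ' τ => τ^a * (1-τ)^b * Dm s m ((ξ'-η)*τ+η))
    (F' := fun ξ' τ => τ^(a+1) * (1-τ)^b * Dm s (m+1) ((ξ'-η)*τ+η))
    (bound := fun _ => B) (Metric.ball_mem_nhds _ (half_pos hc))
    (by
      filter_upwards [Metric.ball_mem_nhds ξ (half_pos hc)] with ξ' hξ'
      exact ((contOn s m a b (half_pos hc)
        (fun τ hτ => (hseg ξ' hξ' τ hτ).1)).mono uIoc_subset_Icc).aestronglyMeasurable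
        measurableSet_uIoc)
    (by
      apply ContinuousOn.intervalIntegrable
      rw [Set.uIcc_of_le (by norm_num : (0:ℝ) ≤ 1)]
      exact contOn s m a b hc h)
    (by
      exact ((contOn s (m+1) (a+1) b hc h).mono uIoc_subset_Icc).aestronglyMeasurable
        measurableSet_uIoc)
    (by
      apply ae_of_all
      intro τ hτ ξ' hξ'
      have hτ' : τ ∈ Set.Icc (0:ℝ) 1 := uIoc_subset_Icc hτ
      obtain ⟨hlo, hhi⟩ := hseg ξ' hξ' τ hτ'
      have hd := Dm_le s (m+1) (half_pos hc) hlo hhi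
      have h1 : |τ^(a+1) * (1-τ)^b| ≤ 1 := by
        rw [abs_mul, abs_pow, abs_pow]
        have ht1 : |τ| ≤ 1 := by rw [abs_le]; exact ⟨by linarith [hτ'.1], hτ'.2⟩
        have h2 : |1-τ| ≤ 1 := by
          rw [abs_le]; exact ⟨by linarith [hτ'.2], by linarith [hτ'.1]⟩
        have hmm : |τ|^(a+1) * |1-τ|^b ≤ 1*1 :=
          mul_le_mul (pow_le_one₀ (abs_nonneg _) ht1)
            (pow_le_one₀ (abs_nonneg _) h2) (pow_nonneg (abs_nonneg _) _)
            (by norm_num : (0:ℝ) ≤ 1)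
        simpa using hmm
      rw [Real.norm_eq_abs, abs_mul]
      have := mul_le_mul h1 hd (abs_nonneg _) (by norm_num : (0:ℝ) ≤ 1)
      rw [one_mul] at this
      exact this)
    (by
      exact intervalIntegrable_const)
    (by
      apply ae_of_all
      intro τ hτ ξ' hξ'
      have hτ' : τ ∈ Set.Icc (0:ℝ) 1 := uIoc_subset_Icc hτ
      have hne : (ξ'-η)*τ+η ≠ 0 := by
        intro h0
        have := (hseg ξ' hξ' τ hτ').1
        rw [h0, abs_zero] at this; linarith
      have hinner : HasDerivAt (fun y => (y-η)*τ+η) τ ξ' := by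
        have he : (fun y : ℝ => (y-η)*τ+η) = fun y => y*τ + (η - η*τ) := by
          funext y; ring
        rw [he]
        simpa using ((hasDerivAt_id ξ').mul_const τ).add_const (η - η*τ)
      have houter := Dm_hasDerivAt s m hne
      have hcomp : HasDerivAt (fun y => Dm s m ((y-η)*τ+η))
          (Dm s (m+1) ((ξ'-η)*τ+η) * τ) ξ' :=
        HasDerivAt.comp (h := fun y => (y-η)*τ+η) (x := ξ') houter hinner
      have hfin := hcomp.const_mul (τ^a * (1-τ)^b)
      show HasDerivAt _ (τ^(a+1) * (1-τ)^b * Dm s (m+1) ((ξ'-η)*τ+η)) ξ'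
      refine hfin.congr_deriv ?_
      rw [pow_succ]; ring)
  have hidx : a + 1 + b = a + b + 1 := by omega
  have hK : K s (a+1) b ξ η
      = ∫ τ in (0:ℝ)..1, τ^(a+1) * (1-τ)^b * Dm s (m+1) ((ξ-η)*τ+η) := by
    rw [K, hm, hidx]
  rw [hK]
  exact hmain.2

lemma iter_eta (s : ℝ) (a : ℕ) (n : ℕ) :
    ∀ (ξ η c : ℝ), 0 < c → (∀ τ ∈ Set.Icc (0:ℝ) 1, c ≤ |(ξ-η)*τ+η|) →
      iteratedDeriv n (fun η' => K s a 0 ξ η') η = K s a n ξ η := by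
  induction n with
  | zero => intro ξ η c hc h; simp [iteratedDeriv_zero]
  | succ n ih =>
    intro ξ η c hc h
    rw [iteratedDeriv_succ]
    have hev : iteratedDeriv n (fun η' => K s a 0 ξ η') =ᶠ[𝓝 η]
        fun η' => K s a n ξ η' := by
      filter_upwards [Metric.ball_mem_nhds η (half_pos hc)] with η' hη'
      refine ih ξ η' (c/2) (half_pos hc) (fun τ hτ => ?_)
      have hd : |η'-η| < c/2 := by rwa [Metric.mem_ball, Real.dist_eq] at hη'
      have hB : |(η'-η)*(1-τ)| ≤ c/2 := by
        rw [abs_mul]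
        have h1 : |1-τ| ≤ 1 := by
          rw [abs_le]; exact ⟨by linarith [hτ.2], by linarith [hτ.1]⟩
        nlinarith [abs_nonneg (η'-η)]
      have he : (ξ-η')*τ+η' = ((ξ-η)*τ+η) + (η'-η)*(1-τ) := by ring
      rw [he]; exact pert_lower (h τ hτ) hB
    rw [hev.deriv_eq]
    exact (hasDerivAt_K_eta s a n hc h).deriv

lemma iter_xi (s : ℝ) (b : ℕ) (n : ℕ) :
    ∀ (ξ η c : ℝ), 0 < c → (∀ τ ∈ Set.Icc (0:ℝ) 1, c ≤ |(ξ-η)*τ+η|) →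
      iteratedDeriv n (fun ξ' => K s 0 b ξ' η) ξ = K s n b ξ η := by
  induction n with
  | zero => intro ξ η c hc h; simp [iteratedDeriv_zero]
  | succ n ih =>
    intro ξ η c hc h
    rw [iteratedDeriv_succ]
    have hev : iteratedDeriv n (fun ξ' => K s 0 b ξ' η) =ᶠ[𝓝 ξ]
        fun ξ' => K s n b ξ' η := by
      filter_upwards [Metric.ball_mem_nhds ξ (half_pos hc)] with ξ' hξ'
      refine ih ξ' η (c/2) (half_pos hc) (fun τ hτ => ?_)
      have hd : |ξ'-ξ| < c/2 := by rwa [Metric.mem_ball, Real.dist_eq] at hξ'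
      have hB : |(ξ'-ξ)*τ| ≤ c/2 := by
        rw [abs_mul]
        have h1 : |τ| ≤ 1 := by rw [abs_le]; exact ⟨by linarith [hτ.1], hτ.2⟩
        nlinarith [abs_nonneg (ξ'-ξ)]
      have he : (ξ'-η)*τ+η = ((ξ-η)*τ+η) + (ξ'-ξ)*τ := by ring
      rw [he]; exact pert_lower (h τ hτ) hB
    rw [hev.deriv_eq]
    exact (hasDerivAt_K_xi s n b hc h).deriv

lemma Mker_eq (s ξ η : ℝ) : Mker s ξ η = K s 0 0 ξ η := by
  unfold Mker K Dm cc
  norm_num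

end Stmt7Aux

open Stmt7Aux Filter Topology in
theorem stmt7 (s : ℝ) (hs : 0 < s) (hs1 : s < 1) (m₁ m₂ : ℕ) :
    ∃ C > (0:ℝ), ∀ ξ η : ℝ, ξ ≠ 0 → η ≠ 0 → |ξ - η| ≤ |η| / 2 →
      |iteratedDeriv m₁ (fun ξ' => iteratedDeriv m₂ (fun η' => Mker s ξ' η') η) ξ|
        ≤ C * (|ξ| + |η|) ^ (2 * s - m₁ - m₂) := by
  set mm := m₁ + m₂ with hmm
  refine ⟨(|cc s mm| + 1) * (2 * 5 ^ mm), by positivity, ?_⟩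
  intro ξ η hξ hη hclose
  have hη' : 0 < |η| := abs_pos.mpr hη
  have hseg : ∀ τ ∈ Set.Icc (0:ℝ) 1, |η|/2 ≤ |(ξ-η)*τ+η| := by
    intro τ hτ
    have he : (ξ-η)*τ+η = η + (ξ-η)*τ := by ring
    rw [he]
    refine pert_lower (le_refl |η|) ?_
    rw [abs_mul]
    have h1 : |τ| ≤ 1 := by rw [abs_le]; exact ⟨by linarith [hτ.1], hτ.2⟩
    nlinarith [abs_nonneg (ξ-η)]
  -- replace inner iterated derivative by K on a neighborhood of ξ
  have hev : (fun ξ' => iteratedDeriv m₂ (fun η' => Mker s ξ' η') η) =ᶠ[𝓝 ξ]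
      fun ξ' => K s 0 m₂ ξ' η := by
    filter_upwards [Metric.ball_mem_nhds ξ (by positivity : (0:ℝ) < |η|/2/2)] with ξ' hξ'
    have hfun : (fun η' => Mker s ξ' η') = fun η' => K s 0 0 ξ' η' :=
      funext (Mker_eq s ξ')
    rw [hfun]
    refine iter_eta s 0 m₂ ξ' η (|η|/2/2) (by positivity) (fun τ hτ => ?_)
    have hd : |ξ'-ξ| < |η|/2/2 := by rwa [Metric.mem_ball, Real.dist_eq] at hξ'
    have he : (ξ'-η)*τ+η = ((ξ-η)*τ+η) + (ξ'-ξ)*τ := by ring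
    rw [he]
    refine pert_lower (hseg τ hτ) ?_
    rw [abs_mul]
    have h1 : |τ| ≤ 1 := by rw [abs_le]; exact ⟨by linarith [hτ.1], hτ.2⟩
    nlinarith [abs_nonneg (ξ'-ξ)]
  rw [Filter.EventuallyEq.iteratedDeriv_eq m₁ hev,
    iter_xi s m₂ m₁ ξ η (|η|/2) (by positivity) hseg]
  -- now estimate K s m₁ m₂ ξ η
  set A := |ξ| + |η| with hA
  have hApos : 0 < A := by positivity
  have hAub : A ≤ 5 * (|η|/2) := by
    have h0 : |ξ| - |η| ≤ |ξ - η| := abs_sub_abs_le_abs_sub ξ η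
    have : |ξ| ≤ 3 * |η| / 2 := by linarith
    simp only [hA]; linarith
  set e : ℝ := 2*s - (mm : ℝ) with he
  have hpow1 : (1:ℝ) ≤ 5 ^ mm := one_le_pow₀ (by norm_num)
  have hAe : (0:ℝ) ≤ A ^ e := Real.rpow_nonneg hApos.le _
  have hkey : (|η|/2) ^ e + A ^ e ≤ 2 * 5 ^ mm * A ^ e := by
    have hfirst : (|η|/2) ^ e ≤ 5 ^ mm * A ^ e := by
      rcases le_or_gt 0 e with hE | hE
      · have h1 : (|η|/2) ^ e ≤ A ^ e :=
          Real.rpow_le_rpow (by positivity) (by simp only [hA]; linarith [abs_nonneg ξ]) hE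
        nlinarith
      · have h1 : (|η|/2) ^ e ≤ (A/5) ^ e := by
          refine Real.rpow_le_rpow_of_nonpos (by positivity) (by linarith) hE.le
        have h2 : (A/5) ^ e = A ^ e / 5 ^ e := Real.div_rpow hApos.le (by norm_num) e
        have h3 : (5:ℝ) ^ (-(mm:ℝ)) ≤ 5 ^ e := by
          refine Real.rpow_le_rpow_of_exponent_le (by norm_num) ?_
          simp only [he]; nlinarith
        have h4 : A ^ e / 5 ^ e ≤ A ^ e / 5 ^ (-(mm:ℝ)) := by
          apply div_le_div_of_nonneg_left hAe (by positivity) h3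
        have h5 : A ^ e / 5 ^ (-(mm:ℝ)) = A ^ e * 5 ^ mm := by
          rw [Real.rpow_neg (by norm_num : (0:ℝ) ≤ 5), div_inv_eq_mul, Real.rpow_natCast]
        linarith [h1.trans (h2 ▸ (h4.trans_eq h5))]
    nlinarith
  have hbound : ∀ τ ∈ Set.uIoc (0:ℝ) 1,
      ‖τ^m₁ * (1-τ)^m₂ * Dm s mm ((ξ-η)*τ+η)‖ ≤ |cc s mm| * (2 * 5 ^ mm * A ^ e) := by
    intro τ hτ
    have hτ' : τ ∈ Set.Icc (0:ℝ) 1 := uIoc_subset_Icc hτ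
    have hd := Dm_le s mm (by positivity : (0:ℝ) < |η|/2) (hseg τ hτ')
      (seg_abs_le hτ')
    have h1 : |τ^m₁ * (1-τ)^m₂| ≤ 1 := by
      rw [abs_mul, abs_pow, abs_pow]
      have ht1 : |τ| ≤ 1 := by rw [abs_le]; exact ⟨by linarith [hτ'.1], hτ'.2⟩
      have h2 : |1-τ| ≤ 1 := by
        rw [abs_le]; exact ⟨by linarith [hτ'.2], by linarith [hτ'.1]⟩
      have hmm2 : |τ|^m₁ * |1-τ|^m₂ ≤ 1*1 :=
        mul_le_mul (pow_le_one₀ (abs_nonneg _) ht1) (pow_le_one₀ (abs_nonneg _) h2)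
          (pow_nonneg (abs_nonneg _) _) (by norm_num : (0:ℝ) ≤ 1)
      simpa using hmm2
    rw [Real.norm_eq_abs, abs_mul]
    have hstep := mul_le_mul h1 hd (abs_nonneg _) (by norm_num : (0:ℝ) ≤ 1)
    rw [one_mul] at hstep
    refine hstep.trans ?_
    exact mul_le_mul_of_nonneg_left hkey (abs_nonneg _)
  have hKb : |K s m₁ m₂ ξ η| ≤ |cc s mm| * (2 * 5 ^ mm * A ^ e) * |1 - 0| := by
    rw [← Real.norm_eq_abs]
    exact intervalIntegral.norm_integral_le_of_norm_le_const (fun τ hτ => hbound τ hτ)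
  have hcast : A ^ (2*s - (m₁:ℝ) - (m₂:ℝ)) = A ^ e := by
    congr 1; simp only [he, hmm]; push_cast; ring
  rw [hcast]
  have : |cc s mm| * (2 * 5 ^ mm * A ^ e) * |1 - 0| = |cc s mm| * (2 * 5 ^ mm) * A ^ e := by
    norm_num; ring
  rw [this] at hKb
  refine hKb.trans ?_
  have : (0:ℝ) ≤ 2 * 5 ^ mm := by positivity
  nlinarith [abs_nonneg (cc s mm)]
end

section
/- Let 0 < s < 1 and let m₁, m₂ ∈ ℕ. Then there exists a constant C > 0 (depending only on s, m₁, m₂) such that for all ξ, η ∈ ℝ with ξ ≠ 0, η ≠ 0 and |ξ| ≤ |η|/4: |∂_ξ^{m₁} ∂_η^{m₂} M(ξ,η)| ≤ C · (|η|^{2s − m₁ − m₂} + |ξ|^{2s+1−m₁} / |η|^{m₂+1}). -/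
open MeasureTheory Real

noncomputable def cc (s : ℝ) (n : ℕ) : ℝ := ∏ i ∈ Finset.range n, (2*s + 1 - i)

noncomputable def FF (s x : ℝ) : ℝ := |x| ^ (2*s) * x

noncomputable def GG (s : ℝ) (n : ℕ) (x : ℝ) : ℝ :=
  cc s n * |x| ^ (2*s + 1 - n) * (Real.sign x)^(n+1)

lemma cc_succ (s : ℝ) (n : ℕ) : cc s (n+1) = cc s n * (2*s + 1 - n) :=
  Finset.prod_range_succ _ _

lemma GG_zero {s x : ℝ} (hx : x ≠ 0) : GG s 0 x = FF s x := by
  unfold GG FF cc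
  rcases hx.lt_or_gt with h | h
  · rw [Real.sign_of_neg h, abs_of_neg h]
    rw [show (2*s + 1 - (0:ℕ) : ℝ) = 2*s + 1 by push_cast; ring,
      Real.rpow_add_one (neg_ne_zero.mpr hx)]
    ring
  · rw [Real.sign_of_pos h, abs_of_pos h]
    rw [show (2*s + 1 - (0:ℕ) : ℝ) = 2*s + 1 by push_cast; ring,
      Real.rpow_add_one (ne_of_gt h)]
    ring

lemma abs_GG {s x : ℝ} (n : ℕ) (hx : x ≠ 0) :
    |GG s n x| = |cc s n| * |x| ^ (2*s + 1 - n) := by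
  unfold GG
  rw [abs_mul, abs_mul, abs_pow]
  rcases hx.lt_or_gt with h | h
  · rw [Real.sign_of_neg h]; simp [abs_of_nonneg (Real.rpow_nonneg (abs_nonneg x) _)]
  · rw [Real.sign_of_pos h]; simp [abs_of_nonneg (Real.rpow_nonneg (abs_nonneg x) _)]

lemma hasDerivAt_GG {s : ℝ} (n : ℕ) {x : ℝ} (hx : x ≠ 0) :
    HasDerivAt (GG s n) (GG s (n+1) x) x := by
  rcases hx.lt_or_gt with h | h
  · -- x < 0
    have key : HasDerivAt (fun y : ℝ => cc s n * ((-y) ^ (2*s+1-n)) * (-1:ℝ)^(n+1))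
        ((cc s n * ((2*s+1-n) * (-x) ^ (2*s+1-n-1) * (-1))) * (-1:ℝ)^(n+1)) x := by
      have h1 : HasDerivAt (fun y : ℝ => (-y) ^ (2*s+1-(n:ℝ)))
          ((2*s+1-n) * (-x) ^ (2*s+1-n-1) * (-1)) x := by
        have := (Real.hasDerivAt_rpow_const (p := 2*s+1-(n:ℝ))
          (Or.inl (neg_ne_zero.mpr hx))).comp x ((hasDerivAt_id x).neg)
        exact this
      exact (h1.const_mul (cc s n)).mul_const _
    have heq : (fun y : ℝ => cc s n * ((-y) ^ (2*s+1-n)) * (-1:ℝ)^(n+1)) =ᶠ[nhds x] GG s n := by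
      filter_upwards [Iio_mem_nhds h] with y hy
      simp only [Set.mem_Iio] at hy
      unfold GG
      rw [abs_of_neg hy, Real.sign_of_neg hy]
    have := key.congr_of_eventuallyEq heq.symm
    refine this.congr_deriv ?_
    unfold GG
    rw [cc_succ, abs_of_neg h, Real.sign_of_neg h]
    rw [show (2*s+1-((n:ℕ)+1:ℕ) : ℝ) = 2*s+1-(n:ℝ)-1 by push_cast; ring]
    rw [pow_succ (-1:ℝ) (n+1)]
    ring
  · -- x > 0
    have key : HasDerivAt (fun y : ℝ => cc s n * (y ^ (2*s+1-n)))
        (cc s n * ((2*s+1-n) * x ^ (2*s+1-n-1))) x :=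
      (Real.hasDerivAt_rpow_const (p := 2*s+1-(n:ℝ)) (Or.inl hx)).const_mul _
    have heq : (fun y : ℝ => cc s n * (y ^ (2*s+1-n))) =ᶠ[nhds x] GG s n := by
      filter_upwards [Ioi_mem_nhds h] with y hy
      simp only [Set.mem_Ioi] at hy
      unfold GG
      rw [abs_of_pos hy, Real.sign_of_pos hy, one_pow, mul_one]
    have := key.congr_of_eventuallyEq heq.symm
    refine this.congr_deriv ?_
    unfold GG
    rw [cc_succ, abs_of_pos h, Real.sign_of_pos h, one_pow, mul_one]
    rw [show (2*s+1-((n:ℕ)+1:ℕ) : ℝ) = 2*s+1-(n:ℝ)-1 by push_cast; ring]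
    ring

lemma hasDerivAt_FF {s : ℝ} (hs : 0 < s) (x : ℝ) :
    HasDerivAt (FF s) ((2*s+1) * |x| ^ (2*s)) x := by
  rcases eq_or_ne x 0 with rfl | hx
  · rw [hasDerivAt_iff_tendsto_slope]
    have habs : |(0:ℝ)| ^ (2*s) = 0 := by
      rw [abs_zero, Real.zero_rpow (by positivity)]
    rw [habs, mul_zero]
    have hev : (fun y : ℝ => |y| ^ (2*s)) =ᶠ[nhdsWithin 0 {(0:ℝ)}ᶜ] slope (FF s) 0 := by
      filter_upwards [self_mem_nhdsWithin] with y hy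
      simp only [Set.mem_compl_iff, Set.mem_singleton_iff] at hy
      rw [slope_def_field]
      unfold FF
      rw [abs_zero, Real.zero_rpow (by positivity), zero_mul]
      field_simp
      ring
    refine Filter.Tendsto.congr' hev ?_
    have : Filter.Tendsto (fun y : ℝ => |y| ^ (2*s)) (nhds 0) (nhds 0) := by
      have hc : ContinuousAt (fun y : ℝ => |y| ^ (2*s)) 0 := by
        apply ContinuousAt.rpow_const (continuous_abs.continuousAt)
        right; positivity
      have := hc.tendsto
      simpa [abs_zero, Real.zero_rpow (by positivity : (2*s) ≠ 0)] using this
    exact this.mono_left nhdsWithin_le_nhds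
  · have h1 : HasDerivAt (GG s 0) (GG s 1 x) x := hasDerivAt_GG 0 hx
    have heq : GG s 0 =ᶠ[nhds x] FF s := by
      filter_upwards [compl_singleton_mem_nhds hx] with y hy
      exact GG_zero hy
    have h2 := h1.congr_of_eventuallyEq heq.symm
    refine h2.congr_deriv ?_
    unfold GG
    rcases hx.lt_or_gt with h | h
    · rw [Real.sign_of_neg h, cc_succ]
      rw [show (2*s+1-((1:ℕ)):ℝ) = 2*s by push_cast; ring]
      unfold cc; norm_num
    · rw [Real.sign_of_pos h, cc_succ]
      rw [show (2*s+1-((1:ℕ)):ℝ) = 2*s by push_cast; ring]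
      unfold cc; norm_num

lemma Mker_eq {s : ℝ} (hs : 0 < s) {ξ η : ℝ} (hne : ξ ≠ η) :
    Mker s ξ η = (FF s ξ - FF s η) / ((2*s+1) * (ξ - η)) := by
  have hlin : ∀ t : ℝ, HasDerivAt (fun τ : ℝ => (ξ - η) * τ + η) (ξ - η) t := by
    intro t
    simpa using ((hasDerivAt_id t).const_mul (ξ - η)).add_const η
  have hder : ∀ t ∈ Set.uIcc (0:ℝ) 1,
      HasDerivAt (fun τ => FF s ((ξ - η) * τ + η))
        (((2*s+1) * |(ξ - η) * t + η| ^ (2*s)) * (ξ - η)) t := by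
    intro t _
    exact (hasDerivAt_FF hs ((ξ - η) * t + η)).comp t (hlin t)
  have hcont : Continuous fun t : ℝ => ((2*s+1) * |(ξ - η) * t + η| ^ (2*s)) * (ξ - η) := by
    apply Continuous.mul _ continuous_const
    apply Continuous.mul continuous_const
    apply Continuous.rpow_const (continuous_abs.comp (by continuity))
    intro y; right; positivity
  have hint := intervalIntegral.integral_eq_sub_of_hasDerivAt hder
    (hcont.intervalIntegrable 0 1)
  simp only [one_mul, zero_mul, mul_one, mul_zero, zero_add] at hint
  have hre : (∫ t in (0:ℝ)..1, ((2*s+1) * |(ξ - η) * t + η| ^ (2*s)) * (ξ - η))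
      = ((2*s+1) * (ξ - η)) * Mker s ξ η := by
    unfold Mker
    rw [← intervalIntegral.integral_const_mul]
    congr 1; ext t; ring
  rw [hre] at hint
  have hne2 : (2*s+1) * (ξ - η) ≠ 0 := by
    apply mul_ne_zero (by positivity) (sub_ne_zero.mpr hne)
  field_simp
  rw [mul_comm] at hint
  rw [mul_assoc, hint, sub_add_cancel]

lemma lemA (s : ℝ) (hs : 0 < s) (m : ℕ) :
    ∃ b : ℝ, ∃ B : ℕ → ℝ, ∀ x y : ℝ, y ≠ 0 → x ≠ y →
      iteratedDeriv m (fun y' => (FF s x - FF s y') / ((2*s+1) * (x - y'))) y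
        = b * FF s x * (x - y) ^ (-(1+m : ℤ))
          + ∑ j ∈ Finset.range (m+1), B j * GG s j y * (x - y) ^ (-(1+m : ℤ) + j) := by
  induction m with
  | zero =>
    refine ⟨(2*s+1)⁻¹, fun _ => -(2*s+1)⁻¹, fun x y hy hxy => ?_⟩
    rw [iteratedDeriv_zero]
    have hsub : x - y ≠ 0 := sub_ne_zero.mpr hxy
    have hs1 : (2*s+1) ≠ 0 := by positivity
    simp only [zero_add, Finset.sum_range_one, Nat.cast_zero, add_zero, zpow_neg, zpow_one]
    rw [GG_zero hy]
    field_simp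
    ring
  | succ m ih =>
    obtain ⟨b, B, hB⟩ := ih
    refine ⟨b * (1+m),
      fun j => (if j = 0 then 0 else B (j-1)) + (if j ≤ m then B j * ((1+m : ℝ) - j) else 0),
      fun x y hy hxy => ?_⟩
    rw [iteratedDeriv_succ]
    have hsub : x - y ≠ 0 := sub_ne_zero.mpr hxy
    have hev : iteratedDeriv m (fun y' => (FF s x - FF s y') / ((2*s+1) * (x - y')))
        =ᶠ[nhds y] fun y' => b * FF s x * (x - y') ^ (-(1+m : ℤ))
          + ∑ j ∈ Finset.range (m+1), B j * GG s j y' * (x - y') ^ (-(1+m : ℤ) + j) := by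
      filter_upwards [compl_singleton_mem_nhds hy, compl_singleton_mem_nhds (Ne.symm hxy)]
        with y' h1 h2
      exact hB x y' h1 (Ne.symm h2)
    rw [hev.deriv_eq]
    have hzpow : ∀ e : ℤ, HasDerivAt (fun y' : ℝ => (x - y') ^ e)
        (-(e : ℝ) * (x - y) ^ (e - 1)) y := by
      intro e
      have h1 : HasDerivAt (fun y' : ℝ => x - y') (-1) y := (hasDerivAt_id y).const_sub x
      have h2 : HasDerivAt (fun y' : ℝ => (x - y') ^ e) ((e:ℝ) * (x - y) ^ (e - 1) * -1) y :=
        (hasDerivAt_zpow e (x - y) (Or.inl hsub)).comp y h1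
      convert h2 using 1
      ring
    have hterm0 : HasDerivAt (fun y' : ℝ => b * FF s x * (x - y') ^ (-(1+m : ℤ)))
        (b * FF s x * ((1+m : ℝ) * (x - y) ^ (-(1+m : ℤ) - 1))) y := by
      have := (hzpow (-(1+m : ℤ))).const_mul (b * FF s x)
      refine this.congr_deriv ?_
      push_cast
      ring
    have hterms : ∀ j ∈ Finset.range (m+1), HasDerivAt
        (fun y' : ℝ => B j * GG s j y' * (x - y') ^ (-(1+m : ℤ) + j))
        (B j * GG s (j+1) y * (x - y) ^ (-(1+m : ℤ) + j)
          + B j * GG s j y * (((1+m : ℝ) - j) * (x - y) ^ (-(1+m : ℤ) + j - 1))) y := by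
      intro j _
      have hG := ((hasDerivAt_GG (s := s) j hy).const_mul (B j)).mul (hzpow (-(1+m : ℤ) + j))
      refine hG.congr_deriv ?_
      push_cast
      ring
    have hsum : HasDerivAt (fun y' => b * FF s x * (x - y') ^ (-(1+m : ℤ))
        + ∑ j ∈ Finset.range (m+1), B j * GG s j y' * (x - y') ^ (-(1+m : ℤ) + j))
        (b * FF s x * ((1+m : ℝ) * (x - y) ^ (-(1+m : ℤ) - 1))
          + ∑ j ∈ Finset.range (m+1), (B j * GG s (j+1) y * (x - y) ^ (-(1+m : ℤ) + j)
            + B j * GG s j y * (((1+m : ℝ) - j) * (x - y) ^ (-(1+m : ℤ) + j - 1)))) y :=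
      hterm0.add (HasDerivAt.fun_sum hterms)
    rw [hsum.deriv]
    -- now the algebraic re-indexing
    have e1 : (-(1+((m:ℕ)+1:ℕ) : ℤ)) = -(1+m : ℤ) - 1 := by push_cast; ring

    have hS1 : (∑ j ∈ Finset.range (m+1+1),
        (if j = 0 then (0:ℝ) else B (j-1)) * GG s j y * (x - y) ^ (-(1+m : ℤ) - 1 + j))
        = ∑ j ∈ Finset.range (m+1), B j * GG s (j+1) y * (x - y) ^ (-(1+m : ℤ) + j) := by
      rw [Finset.sum_range_succ']
      simp only [Nat.succ_ne_zero, if_false, if_pos rfl, zero_mul, add_zero,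
        Nat.add_sub_cancel, reduceIte]
      refine Finset.sum_congr rfl fun j _ => ?_
      rw [show (-(1+m : ℤ) - 1 + ((j:ℕ)+1:ℕ)) = -(1+m : ℤ) + j by push_cast; ring]
    have hS2 : (∑ j ∈ Finset.range (m+1+1),
        (if j ≤ m then B j * ((1+m : ℝ) - j) else 0) * GG s j y * (x - y) ^ (-(1+m : ℤ) - 1 + j))
        = ∑ j ∈ Finset.range (m+1), B j * GG s j y * (((1+m : ℝ) - j) * (x - y) ^ (-(1+m : ℤ) + j - 1)) := by
      rw [Finset.sum_range_succ]
      rw [if_neg (by omega : ¬ m+1 ≤ m)]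
      rw [zero_mul, zero_mul, add_zero]
      refine Finset.sum_congr rfl fun j hj => ?_
      rw [if_pos (by simpa [Nat.lt_succ_iff] using hj)]
      rw [show (-(1+m : ℤ) - 1 + (j:ℕ)) = -(1+m : ℤ) + j - 1 by push_cast; ring]
      ring
    rw [e1]
    have hsplit : (∑ j ∈ Finset.range (m+1+1),
        ((if j = 0 then (0:ℝ) else B (j-1)) + (if j ≤ m then B j * ((1+m : ℝ) - j) else 0))
          * GG s j y * (x - y) ^ (-(1+m : ℤ) - 1 + j))
        = (∑ j ∈ Finset.range (m+1+1),
            (if j = 0 then (0:ℝ) else B (j-1)) * GG s j y * (x - y) ^ (-(1+m : ℤ) - 1 + j))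
          + ∑ j ∈ Finset.range (m+1+1),
            (if j ≤ m then B j * ((1+m : ℝ) - j) else 0) * GG s j y * (x - y) ^ (-(1+m : ℤ) - 1 + j) := by
      rw [← Finset.sum_add_distrib]
      exact Finset.sum_congr rfl fun j _ => by ring
    rw [hsplit, hS1, hS2]
    rw [Finset.sum_add_distrib]
    push_cast
    ring

lemma lemB (s : ℝ) (hs : 0 < s) (m₂ : ℕ) (b : ℝ) (B0 : ℕ → ℝ) (m₁ : ℕ) :
    ∃ A : ℕ → ℝ, ∃ B : ℕ → ℝ, ∀ x y : ℝ, x ≠ 0 → y ≠ 0 → x ≠ y →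
      iteratedDeriv m₁ (fun x' => b * FF s x' * (x' - y) ^ (-(1+m₂ : ℤ))
          + ∑ j ∈ Finset.range (m₂+1), B0 j * GG s j y * (x' - y) ^ (-(1+m₂ : ℤ) + j)) x
        = (∑ k ∈ Finset.range (m₁+1), A k * GG s k x * (x - y) ^ (-(1+m₁+m₂ : ℤ) + k))
          + ∑ j ∈ Finset.range (m₂+1), B j * GG s j y * (x - y) ^ (-(1+m₁+m₂ : ℤ) + j) := by
  induction m₁ with
  | zero =>
    refine ⟨fun _ => b, B0, fun x y hx hy hxy => ?_⟩
    rw [iteratedDeriv_zero]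
    simp only [zero_add, Finset.sum_range_one, Nat.cast_zero, add_zero]
    rw [GG_zero hx]
  | succ m ih =>
    obtain ⟨A, B, hAB⟩ := ih
    refine ⟨fun k => (if k = 0 then 0 else A (k-1))
        + (if k ≤ m then A k * (-(1+m+m₂ : ℝ) + k) else 0),
      fun j => B j * (-(1+m+m₂ : ℝ) + j),
      fun x y hx hy hxy => ?_⟩
    rw [iteratedDeriv_succ]
    have hsub : x - y ≠ 0 := sub_ne_zero.mpr hxy
    have hev : iteratedDeriv m (fun x' => b * FF s x' * (x' - y) ^ (-(1+m₂ : ℤ))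
          + ∑ j ∈ Finset.range (m₂+1), B0 j * GG s j y * (x' - y) ^ (-(1+m₂ : ℤ) + j))
        =ᶠ[nhds x] fun x' =>
          (∑ k ∈ Finset.range (m+1), A k * GG s k x' * (x' - y) ^ (-(1+m+m₂ : ℤ) + k))
          + ∑ j ∈ Finset.range (m₂+1), B j * GG s j y * (x' - y) ^ (-(1+m+m₂ : ℤ) + j) := by
      filter_upwards [compl_singleton_mem_nhds hx, compl_singleton_mem_nhds hxy]
        with x' h1 h2
      exact hAB x' y h1 hy h2
    rw [hev.deriv_eq]
    have hzpow : ∀ e : ℤ, HasDerivAt (fun x' : ℝ => (x' - y) ^ e)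
        ((e : ℝ) * (x - y) ^ (e - 1)) x := by
      intro e
      have h1 : HasDerivAt (fun x' : ℝ => x' - y) 1 x := (hasDerivAt_id x).sub_const y
      have h2 : HasDerivAt (fun x' : ℝ => (x' - y) ^ e) ((e:ℝ) * (x - y) ^ (e - 1) * 1) x :=
        by have h0 := hasDerivAt_zpow e (x - y) (Or.inl hsub); exact h0.comp x h1
      simpa using h2
    have htermsA : ∀ k ∈ Finset.range (m+1), HasDerivAt
        (fun x' : ℝ => A k * GG s k x' * (x' - y) ^ (-(1+m+m₂ : ℤ) + k))
        (A k * GG s (k+1) x * (x - y) ^ (-(1+m+m₂ : ℤ) + k)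
          + A k * GG s k x * ((-(1+m+m₂ : ℝ) + k) * (x - y) ^ (-(1+m+m₂ : ℤ) + k - 1))) x := by
      intro k _
      have hG := ((hasDerivAt_GG (s := s) k hx).const_mul (A k)).mul (hzpow (-(1+m+m₂ : ℤ) + k))
      refine hG.congr_deriv ?_
      push_cast
      ring
    have htermsB : ∀ j ∈ Finset.range (m₂+1), HasDerivAt
        (fun x' : ℝ => B j * GG s j y * (x' - y) ^ (-(1+m+m₂ : ℤ) + j))
        (B j * GG s j y * ((-(1+m+m₂ : ℝ) + j) * (x - y) ^ (-(1+m+m₂ : ℤ) + j - 1))) x := by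
      intro j _
      have hG := (hzpow (-(1+m+m₂ : ℤ) + j)).const_mul (B j * GG s j y)
      refine hG.congr_deriv ?_
      push_cast
      ring
    have hsum : HasDerivAt (fun x' =>
        (∑ k ∈ Finset.range (m+1), A k * GG s k x' * (x' - y) ^ (-(1+m+m₂ : ℤ) + k))
          + ∑ j ∈ Finset.range (m₂+1), B j * GG s j y * (x' - y) ^ (-(1+m+m₂ : ℤ) + j))
        ((∑ k ∈ Finset.range (m+1), (A k * GG s (k+1) x * (x - y) ^ (-(1+m+m₂ : ℤ) + k)
            + A k * GG s k x * ((-(1+m+m₂ : ℝ) + k) * (x - y) ^ (-(1+m+m₂ : ℤ) + k - 1))))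
          + ∑ j ∈ Finset.range (m₂+1),
            B j * GG s j y * ((-(1+m+m₂ : ℝ) + j) * (x - y) ^ (-(1+m+m₂ : ℤ) + j - 1))) x :=
      (HasDerivAt.fun_sum htermsA).add (HasDerivAt.fun_sum htermsB)
    rw [hsum.deriv]
    have e1 : (-(1+((m:ℕ)+1:ℕ)+m₂ : ℤ)) = -(1+m+m₂ : ℤ) - 1 := by push_cast; ring
    have hS1 : (∑ k ∈ Finset.range (m+1+1),
        (if k = 0 then (0:ℝ) else A (k-1)) * GG s k x * (x - y) ^ (-(1+m+m₂ : ℤ) - 1 + k))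
        = ∑ k ∈ Finset.range (m+1), A k * GG s (k+1) x * (x - y) ^ (-(1+m+m₂ : ℤ) + k) := by
      rw [Finset.sum_range_succ']
      simp only [Nat.succ_ne_zero, if_false, if_pos rfl, zero_mul, add_zero,
        Nat.add_sub_cancel, reduceIte]
      refine Finset.sum_congr rfl fun k _ => ?_
      rw [show (-(1+m+m₂ : ℤ) - 1 + ((k:ℕ)+1:ℕ)) = -(1+m+m₂ : ℤ) + k by push_cast; ring]
    have hS2 : (∑ k ∈ Finset.range (m+1+1),
        (if k ≤ m then A k * (-(1+m+m₂ : ℝ) + k) else 0) * GG s k x * (x - y) ^ (-(1+m+m₂ : ℤ) - 1 + k))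
        = ∑ k ∈ Finset.range (m+1),
          A k * GG s k x * ((-(1+m+m₂ : ℝ) + k) * (x - y) ^ (-(1+m+m₂ : ℤ) + k - 1)) := by
      rw [Finset.sum_range_succ]
      rw [if_neg (by omega : ¬ m+1 ≤ m)]
      rw [zero_mul, zero_mul, add_zero]
      refine Finset.sum_congr rfl fun k hk => ?_
      rw [if_pos (by simpa [Nat.lt_succ_iff] using hk)]
      rw [show (-(1+m+m₂ : ℤ) - 1 + (k:ℕ)) = -(1+m+m₂ : ℤ) + k - 1 by push_cast; ring]
      ring
    have hS3 : (∑ j ∈ Finset.range (m₂+1),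
        (B j * (-(1+m+m₂ : ℝ) + j)) * GG s j y * (x - y) ^ (-(1+m+m₂ : ℤ) - 1 + j))
        = ∑ j ∈ Finset.range (m₂+1),
          B j * GG s j y * ((-(1+m+m₂ : ℝ) + j) * (x - y) ^ (-(1+m+m₂ : ℤ) + j - 1)) := by
      refine Finset.sum_congr rfl fun j _ => ?_
      rw [show (-(1+m+m₂ : ℤ) - 1 + (j:ℕ)) = -(1+m+m₂ : ℤ) + j - 1 by push_cast; ring]
      ring
    have e2 : ∀ k : ℕ, (-(1+((m:ℕ)+1:ℕ)+m₂ : ℤ) + k) = -(1+m+m₂ : ℤ) - 1 + k := fun k => by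
      push_cast; ring
    simp only [e2]
    have hsplit : (∑ k ∈ Finset.range (m+1+1),
        ((if k = 0 then (0:ℝ) else A (k-1)) + (if k ≤ m then A k * (-(1+m+m₂ : ℝ) + k) else 0))
          * GG s k x * (x - y) ^ (-(1+m+m₂ : ℤ) - 1 + k))
        = (∑ k ∈ Finset.range (m+1+1),
            (if k = 0 then (0:ℝ) else A (k-1)) * GG s k x * (x - y) ^ (-(1+m+m₂ : ℤ) - 1 + k))
          + ∑ k ∈ Finset.range (m+1+1),
            (if k ≤ m then A k * (-(1+m+m₂ : ℝ) + k) else 0) * GG s k x * (x - y) ^ (-(1+m+m₂ : ℤ) - 1 + k) := by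
      rw [← Finset.sum_add_distrib]
      exact Finset.sum_congr rfl fun k _ => by ring
    rw [hsplit, hS1, hS2, hS3]
    rw [Finset.sum_add_distrib]

theorem stmt8 (s : ℝ) (hs : 0 < s) (hs1 : s < 1) (m₁ m₂ : ℕ) :
    ∃ C > (0:ℝ), ∀ ξ η : ℝ, ξ ≠ 0 → η ≠ 0 → |ξ| ≤ |η| / 4 →
      |iteratedDeriv m₁ (fun ξ' => iteratedDeriv m₂ (fun η' => Mker s ξ' η') η) ξ|
        ≤ C * (|η| ^ (2 * s - m₁ - m₂) + |ξ| ^ (2 * s + 1 - m₁) / |η| ^ ((m₂ : ℝ) + 1)) := by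
  obtain ⟨b, B0, hA⟩ := lemA s hs m₂
  obtain ⟨A, B, hB⟩ := lemB s hs m₂ b B0 m₁
  set P : ℝ := 2^(m₁+m₂+1) with hPdef
  have hPpos : (0:ℝ) < P := by positivity
  set D1 : ℝ := ∑ k ∈ Finset.range (m₁+1), |A k| * |cc s k| with hD1
  set D2 : ℝ := ∑ j ∈ Finset.range (m₂+1), |B j| * |cc s j| with hD2
  have hD1n : 0 ≤ D1 := Finset.sum_nonneg fun k _ => by positivity
  have hD2n : 0 ≤ D2 := Finset.sum_nonneg fun j _ => by positivity
  refine ⟨P * (D1 + D2) + 1, by positivity, fun ξ η hξ hη hle => ?_⟩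
  have hξ' : (0:ℝ) < |ξ| := abs_pos.mpr hξ
  have hη' : (0:ℝ) < |η| := abs_pos.mpr hη
  have hle' : |ξ| ≤ |η| := by linarith
  have hgap : |η|/2 ≤ |ξ - η| := by
    have := abs_sub_abs_le_abs_sub η ξ
    rw [abs_sub_comm η ξ] at this
    linarith
  have hξη : ξ ≠ η := by
    intro h; rw [h] at hle; linarith
  have hsub : ξ - η ≠ 0 := sub_ne_zero.mpr hξη
  -- replace the iterated derivatives by the closed-form expression
  have E1 : (fun x' => iteratedDeriv m₂ (fun y' => Mker s x' y') η) =ᶠ[nhds ξ]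
      (fun x' => b * FF s x' * (x' - η) ^ (-(1+m₂ : ℤ))
        + ∑ j ∈ Finset.range (m₂+1), B0 j * GG s j η * (x' - η) ^ (-(1+m₂ : ℤ) + j)) := by
    filter_upwards [compl_singleton_mem_nhds hξη] with x' hx'
    have Einner : (fun y' => Mker s x' y') =ᶠ[nhds η]
        (fun y' => (FF s x' - FF s y') / ((2*s+1) * (x' - y'))) := by
      filter_upwards [compl_singleton_mem_nhds (Ne.symm hx')] with y' hy'
      exact Mker_eq hs (Ne.symm hy')
    rw [Filter.EventuallyEq.iteratedDeriv_eq m₂ Einner]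
    exact hA x' η hη hx'
  rw [Filter.EventuallyEq.iteratedDeriv_eq m₁ E1, hB ξ η hξ hη hξη]
  -- basic bound for the zpow factors
  have hP : ∀ e : ℤ, e ≤ 0 → -((m₁:ℤ)+m₂+1) ≤ e → |(ξ - η) ^ e| ≤ P * |η| ^ (e:ℝ) := by
    intro e he1 he2
    have habsz : |(ξ - η) ^ e| = |ξ - η| ^ e := by
      rw [← Real.norm_eq_abs, ← Real.norm_eq_abs, norm_zpow]
    rw [habsz, ← Real.rpow_intCast |ξ - η| e]
    have h1 : |ξ - η| ^ (e:ℝ) ≤ (|η|/2) ^ (e:ℝ) :=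
      Real.rpow_le_rpow_of_nonpos (by positivity) hgap (by exact_mod_cast he1)
    have h2 : (|η|/2) ^ (e:ℝ) = |η| ^ (e:ℝ) * ((2:ℝ) ^ (e:ℝ))⁻¹ := by
      rw [Real.div_rpow (abs_nonneg η) (by norm_num : (0:ℝ) ≤ 2)]
      ring
    have h3 : ((2:ℝ) ^ (e:ℝ))⁻¹ = (2:ℝ) ^ (-(e:ℝ)) := by
      rw [Real.rpow_neg (by norm_num : (0:ℝ) ≤ 2)]
    have h4 : (2:ℝ) ^ (-(e:ℝ)) ≤ P := by
      rw [hPdef, ← Real.rpow_natCast 2 (m₁+m₂+1)]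
      apply Real.rpow_le_rpow_of_exponent_le (by norm_num)
      push_cast
      have : (-(e:ℝ)) ≤ ((m₁:ℤ)+m₂+1 : ℤ) := by exact_mod_cast neg_le.mpr he2
      push_cast at this
      linarith
    calc |ξ - η| ^ (e:ℝ) ≤ (|η|/2) ^ (e:ℝ) := h1
      _ = |η| ^ (e:ℝ) * ((2:ℝ) ^ (e:ℝ))⁻¹ := h2
      _ = |η| ^ (e:ℝ) * (2:ℝ) ^ (-(e:ℝ)) := by rw [h3]
      _ ≤ |η| ^ (e:ℝ) * P := by
          apply mul_le_mul_of_nonneg_left h4 (Real.rpow_nonneg (abs_nonneg η) _)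
      _ = P * |η| ^ (e:ℝ) := mul_comm _ _
  -- per-term bounds
  set R1 : ℝ := |η| ^ (2 * s - m₁ - m₂) with hR1def
  set R2 : ℝ := |ξ| ^ (2 * s + 1 - m₁) / |η| ^ ((m₂ : ℝ) + 1) with hR2def
  have hR1n : 0 ≤ R1 := Real.rpow_nonneg (abs_nonneg η) _
  have hR2n : 0 ≤ R2 := div_nonneg (Real.rpow_nonneg (abs_nonneg ξ) _)
    (Real.rpow_nonneg (abs_nonneg η) _)
  have hR2' : R2 = |ξ| ^ (2 * s + 1 - (m₁:ℝ)) * |η| ^ (-((m₂:ℝ) + 1)) := by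
    rw [hR2def, Real.rpow_neg (abs_nonneg η), div_eq_mul_inv]
  have htermA : ∀ k ∈ Finset.range (m₁+1),
      |A k * GG s k ξ * (ξ - η) ^ (-(1+m₁+m₂ : ℤ) + k)| ≤ (|A k| * |cc s k|) * (P * R2) := by
    intro k hk
    have hkm : k ≤ m₁ := Nat.lt_succ_iff.mp (Finset.mem_range.mp hk)
    have hkm' : (k:ℝ) ≤ m₁ := by exact_mod_cast hkm
    rw [abs_mul, abs_mul, abs_GG k hξ]
    have h1 : |(ξ - η) ^ (-(1+m₁+m₂ : ℤ) + k)| ≤ P * |η| ^ ((-(1+m₁+m₂ : ℤ) + k : ℤ):ℝ) :=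
      hP _ (by omega) (by omega)
    calc |A k| * (|cc s k| * |ξ| ^ (2*s+1-(k:ℝ))) * |(ξ - η) ^ (-(1+m₁+m₂ : ℤ) + k)|
        ≤ |A k| * (|cc s k| * |ξ| ^ (2*s+1-(k:ℝ))) * (P * |η| ^ ((-(1+m₁+m₂ : ℤ) + k : ℤ):ℝ)) := by
          apply mul_le_mul_of_nonneg_left h1 (by positivity)
      _ = (|A k| * |cc s k| * P) * (|ξ| ^ (2*s+1-(k:ℝ)) * |η| ^ ((-(1+m₁+m₂ : ℤ) + k : ℤ):ℝ)) := by
          ring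
      _ ≤ (|A k| * |cc s k| * P) * (|ξ| ^ (2*s+1-(m₁:ℝ)) * |η| ^ (-((m₂:ℝ) + 1))) := by
          apply mul_le_mul_of_nonneg_left _ (by positivity)
          have e3 : (2*s+1-(k:ℝ)) = (2*s+1-(m₁:ℝ)) + ((m₁:ℝ)-k) := by ring
          rw [e3, Real.rpow_add hξ']
          have h4 : |ξ| ^ ((m₁:ℝ)-k) ≤ |η| ^ ((m₁:ℝ)-k) :=
            Real.rpow_le_rpow (abs_nonneg ξ) hle' (by linarith)
          calc |ξ| ^ (2*s+1-(m₁:ℝ)) * |ξ| ^ ((m₁:ℝ)-k) * |η| ^ ((-(1+m₁+m₂ : ℤ) + k : ℤ):ℝ)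
              ≤ |ξ| ^ (2*s+1-(m₁:ℝ)) * |η| ^ ((m₁:ℝ)-k) * |η| ^ ((-(1+m₁+m₂ : ℤ) + k : ℤ):ℝ) := by
                have hnn : (0:ℝ) ≤ |η| ^ ((-(1+m₁+m₂ : ℤ) + k : ℤ):ℝ) :=
                  Real.rpow_nonneg (abs_nonneg η) _
                have hnn2 : (0:ℝ) ≤ |ξ| ^ (2*s+1-(m₁:ℝ)) :=
                  Real.rpow_nonneg (abs_nonneg ξ) _
                apply mul_le_mul_of_nonneg_right _ hnn
                exact mul_le_mul_of_nonneg_left h4 hnn2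
            _ = |ξ| ^ (2*s+1-(m₁:ℝ)) * |η| ^ (-((m₂:ℝ) + 1)) := by
                rw [mul_assoc, ← Real.rpow_add hη']
                congr 1
                push_cast
                ring
      _ = (|A k| * |cc s k|) * (P * (|ξ| ^ (2*s+1-(m₁:ℝ)) * |η| ^ (-((m₂:ℝ) + 1)))) := by ring
      _ = (|A k| * |cc s k|) * (P * R2) := by rw [hR2']
  have htermB : ∀ j ∈ Finset.range (m₂+1),
      |B j * GG s j η * (ξ - η) ^ (-(1+m₁+m₂ : ℤ) + j)| ≤ (|B j| * |cc s j|) * (P * R1) := by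
    intro j hj
    have hjm : j ≤ m₂ := Nat.lt_succ_iff.mp (Finset.mem_range.mp hj)
    rw [abs_mul, abs_mul, abs_GG j hη]
    have h1 : |(ξ - η) ^ (-(1+m₁+m₂ : ℤ) + j)| ≤ P * |η| ^ ((-(1+m₁+m₂ : ℤ) + j : ℤ):ℝ) :=
      hP _ (by omega) (by omega)
    calc |B j| * (|cc s j| * |η| ^ (2*s+1-(j:ℝ))) * |(ξ - η) ^ (-(1+m₁+m₂ : ℤ) + j)|
        ≤ |B j| * (|cc s j| * |η| ^ (2*s+1-(j:ℝ))) * (P * |η| ^ ((-(1+m₁+m₂ : ℤ) + j : ℤ):ℝ)) := by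
          apply mul_le_mul_of_nonneg_left h1 (by positivity)
      _ = (|B j| * |cc s j| * P) * (|η| ^ (2*s+1-(j:ℝ)) * |η| ^ ((-(1+m₁+m₂ : ℤ) + j : ℤ):ℝ)) := by
          ring
      _ = (|B j| * |cc s j|) * (P * R1) := by
          rw [← Real.rpow_add hη', hR1def]
          have : (2*s+1-(j:ℝ)) + ((-(1+m₁+m₂ : ℤ) + j : ℤ):ℝ) = 2 * s - m₁ - m₂ := by
            push_cast; ring
          rw [this]
          ring
  -- assemble
  have hsum1 : |∑ k ∈ Finset.range (m₁+1), A k * GG s k ξ * (ξ - η) ^ (-(1+m₁+m₂ : ℤ) + k)|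
      ≤ D1 * (P * R2) := by
    calc _ ≤ ∑ k ∈ Finset.range (m₁+1), |A k * GG s k ξ * (ξ - η) ^ (-(1+m₁+m₂ : ℤ) + k)| :=
          Finset.abs_sum_le_sum_abs _ _
      _ ≤ ∑ k ∈ Finset.range (m₁+1), (|A k| * |cc s k|) * (P * R2) :=
          Finset.sum_le_sum htermA
      _ = D1 * (P * R2) := by rw [hD1, Finset.sum_mul]
  have hsum2 : |∑ j ∈ Finset.range (m₂+1), B j * GG s j η * (ξ - η) ^ (-(1+m₁+m₂ : ℤ) + j)|
      ≤ D2 * (P * R1) := by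
    calc _ ≤ ∑ j ∈ Finset.range (m₂+1), |B j * GG s j η * (ξ - η) ^ (-(1+m₁+m₂ : ℤ) + j)| :=
          Finset.abs_sum_le_sum_abs _ _
      _ ≤ ∑ j ∈ Finset.range (m₂+1), (|B j| * |cc s j|) * (P * R1) :=
          Finset.sum_le_sum htermB
      _ = D2 * (P * R1) := by rw [hD2, Finset.sum_mul]
  calc |(∑ k ∈ Finset.range (m₁+1), A k * GG s k ξ * (ξ - η) ^ (-(1+m₁+m₂ : ℤ) + k))
        + ∑ j ∈ Finset.range (m₂+1), B j * GG s j η * (ξ - η) ^ (-(1+m₁+m₂ : ℤ) + j)|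
      ≤ |∑ k ∈ Finset.range (m₁+1), A k * GG s k ξ * (ξ - η) ^ (-(1+m₁+m₂ : ℤ) + k)|
        + |∑ j ∈ Finset.range (m₂+1), B j * GG s j η * (ξ - η) ^ (-(1+m₁+m₂ : ℤ) + j)| :=
        abs_add_le _ _
    _ ≤ D1 * (P * R2) + D2 * (P * R1) := add_le_add hsum1 hsum2
    _ ≤ (P * (D1 + D2) + 1) * (R1 + R2) := by
        nlinarith [mul_nonneg hD1n hR1n, mul_nonneg hD2n hR2n, mul_nonneg (mul_nonneg hPpos.le hD1n) hR1n, mul_nonneg (mul_nonneg hPpos.le hD2n) hR2n, mul_nonneg hR1n hR2n]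
end

section
/- Let 0 < s < 1. Then there exists a constant c > 0 (depending only on s) such that for all ξ, η ∈ ℝ: M(ξ,η) = ∫₀¹ |(ξ−η)τ + η|^{2s} dτ ≥ c · (|ξ| + |η|)^{2s}. -/
open MeasureTheory Real

lemma Mker_subinterval (s ξ η a b m : ℝ) (hs : 0 < s) (ha : 0 ≤ a) (hab : a ≤ b)
    (hb : b ≤ 1) (hm : 0 ≤ m)
    (hbound : ∀ τ ∈ Set.Icc a b, m ≤ |(ξ - η) * τ + η|) :
    (b - a) * m ^ (2 * s) ≤ Mker s ξ η := by
  set f : ℝ → ℝ := fun τ => |(ξ - η) * τ + η| ^ (2 * s) with hf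
  have hcont : Continuous f := by
    apply Continuous.rpow_const
    · exact continuous_abs.comp (by continuity)
    · intro x; right; positivity
  have hnn : ∀ τ, 0 ≤ f τ := fun τ => Real.rpow_nonneg (abs_nonneg _) _
  have hint : ∀ u v : ℝ, IntervalIntegrable f volume u v :=
    fun u v => hcont.intervalIntegrable u v
  have h1 : (b - a) * m ^ (2 * s) ≤ ∫ τ in a..b, f τ := by
    have := intervalIntegral.integral_mono_on (μ := volume)
      (f := fun _ => m ^ (2 * s)) (g := f) hab intervalIntegrable_const (hint a b)
      (fun τ hτ => Real.rpow_le_rpow hm (hbound τ hτ) (by positivity))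
    simpa [smul_eq_mul] using this
  have e1 : (∫ τ in (0:ℝ)..a, f τ) + (∫ τ in a..(1:ℝ), f τ) = Mker s ξ η :=
    intervalIntegral.integral_add_adjacent_intervals (hint 0 a) (hint a 1)
  have e2 : (∫ τ in a..b, f τ) + (∫ τ in b..(1:ℝ), f τ) = ∫ τ in a..(1:ℝ), f τ :=
    intervalIntegral.integral_add_adjacent_intervals (hint a b) (hint b 1)
  have n1 : 0 ≤ ∫ τ in (0:ℝ)..a, f τ :=
    intervalIntegral.integral_nonneg ha fun τ _ => hnn τ
  have n2 : 0 ≤ ∫ τ in b..(1:ℝ), f τ :=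
    intervalIntegral.integral_nonneg hb fun τ _ => hnn τ
  linarith

theorem stmt10 (s : ℝ) (hs : 0 < s) (hs1 : s < 1) :
    ∃ c > (0:ℝ), ∀ ξ η : ℝ, c * (|ξ| + |η|) ^ (2 * s) ≤ Mker s ξ η := by
  refine ⟨1/64, by norm_num, fun ξ η => ?_⟩
  set A := |ξ| + |η| with hA
  have hA0 : 0 ≤ A := by positivity
  have hm : (0:ℝ) ≤ A / 4 := by linarith
  have habs : |ξ - η| ≤ A := by
    have := abs_sub ξ η
    linarith [abs_sub ξ η]
  -- main subinterval bound
  have key : (1/4 : ℝ) * (A / 4) ^ (2 * s) ≤ Mker s ξ η := by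
    rcases le_total |η| |ξ| with hc | hc
    · have := Mker_subinterval s ξ η (3/4) 1 (A/4) hs (by norm_num) (by norm_num)
        (le_refl 1) hm ?_
      · linarith [this]
      · intro τ hτ
        have hx : |ξ| ≥ A / 2 := by simp only [hA]; linarith
        have heq : (ξ - η) * τ + η = ξ + (ξ - η) * (τ - 1) := by ring
        have h2 : |ξ| ≤ |ξ + (ξ - η) * (τ - 1)| + |(ξ - η) * (τ - 1)| := by
          calc |ξ| = |(ξ + (ξ - η) * (τ - 1)) + (-((ξ - η) * (τ - 1)))| := by ring_nf
          _ ≤ |ξ + (ξ - η) * (τ - 1)| + |(-((ξ - η) * (τ - 1)))| := abs_add_le _ _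
          _ = _ := by rw [abs_neg]
        have h3 : |(ξ - η) * (τ - 1)| ≤ A * (1/4) := by
          rw [abs_mul]
          have ht : |τ - 1| ≤ 1/4 :=
            abs_le.2 ⟨by linarith [hτ.1], by linarith [hτ.2]⟩
          exact mul_le_mul habs ht (abs_nonneg _) hA0
        rw [heq]
        linarith
    · have := Mker_subinterval s ξ η 0 (1/4) (A/4) hs (le_refl 0) (by norm_num)
        (by norm_num) hm ?_
      · linarith [this]
      · intro τ hτ
        have hx : |η| ≥ A / 2 := by simp only [hA]; linarith
        have h2 : |η| ≤ |(ξ - η) * τ + η| + |(ξ - η) * τ| := by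
          calc |η| = |((ξ - η) * τ + η) + (-((ξ - η) * τ))| := by ring_nf
          _ ≤ |(ξ - η) * τ + η| + |(-((ξ - η) * τ))| := abs_add_le _ _
          _ = _ := by rw [abs_neg]
        have h3 : |(ξ - η) * τ| ≤ A * (1/4) := by
          rw [abs_mul]
          have ht : |τ| ≤ 1/4 := abs_le.2 ⟨by linarith [hτ.1], hτ.2⟩
          exact mul_le_mul habs ht (abs_nonneg _) hA0
        linarith
  -- algebra: (1/4) * (A/4)^(2s) ≥ (1/64) * A^(2s)
  have h4 : (A / 4) ^ (2 * s) = A ^ (2 * s) / (4:ℝ) ^ (2 * s) :=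
    Real.div_rpow hA0 (by norm_num : (0:ℝ) ≤ 4) (2 * s)
  have h5 : (4:ℝ) ^ (2 * s) ≤ 16 := by
    have : (4:ℝ) ^ (2 * s) ≤ (4:ℝ) ^ (2:ℝ) :=
      Real.rpow_le_rpow_of_exponent_le (by norm_num) (by linarith)
    have h42 : (4:ℝ) ^ (2:ℝ) = 16 := by
      rw [show (2:ℝ) = ((2:ℕ):ℝ) by norm_num, Real.rpow_natCast]; norm_num
    linarith
  have h6 : (0:ℝ) < (4:ℝ) ^ (2 * s) := Real.rpow_pos_of_pos (by norm_num) _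
  have h7 : A ^ (2 * s) / 16 ≤ A ^ (2 * s) / (4:ℝ) ^ (2 * s) :=
    div_le_div_of_nonneg_left (Real.rpow_nonneg hA0 _) h6 h5
  rw [h4] at key
  linarith
end

section
/- Let 0 < s < 1 and let b₁, b₂ ∈ ℕ. Then the integral ∬_{ℝ²} |ξ|^{b₁} |η|^{b₂} e^{−M(ξ,η)} dξ dη is finite. Consequently, there is a constant C > 0 such that |∬_{ℝ²} ξ^{b₁} η^{b₂} e^{−M(ξ,η)} e^{−i(ξx+ηv)} dξ dη| ≤ C for all x, v ∈ ℝ. -/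
open MeasureTheory Real

lemma Mker_cont (s : ℝ) (hs : 0 < s) :
    Continuous (fun p : ℝ × ℝ => Mker s p.1 p.2) := by
  have := intervalIntegral.continuous_parametric_intervalIntegral_of_continuous'
    (μ := volume) (f := fun (p : ℝ × ℝ) (τ : ℝ) => |(p.1 - p.2) * τ + p.2| ^ (2 * s))
    (by
      apply Continuous.rpow_const
      · exact (continuous_abs.comp (by fun_prop))
      · intro x; right; positivity) 0 1
  exact this

lemma Mker_symm (s ξ η : ℝ) : Mker s ξ η = Mker s η ξ := by
  unfold Mker
  have := intervalIntegral.integral_comp_sub_left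
    (fun t : ℝ => |(η - ξ) * t + ξ| ^ (2 * s)) 1 (a := 0) (b := 1)
  simp only [sub_zero, sub_self] at this
  rw [← this]
  congr 1
  ext τ
  ring_nf

lemma Mker_lb (s : ℝ) (hs : 0 < s) (hs1 : s < 1) (ξ η : ℝ) (h : |η| ≤ |ξ|) :
    (1/4) * (|ξ| / 2) ^ (2 * s) ≤ Mker s ξ η := by
  have hcont : Continuous (fun τ : ℝ => |(ξ - η) * τ + η| ^ (2 * s)) := by
    apply Continuous.rpow_const
    · exact continuous_abs.comp (by fun_prop)
    · intro x; right; positivity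
  have hi1 : IntervalIntegrable (fun τ : ℝ => |(ξ - η) * τ + η| ^ (2 * s)) volume 0 (3/4) :=
    hcont.intervalIntegrable _ _
  have hi2 : IntervalIntegrable (fun τ : ℝ => |(ξ - η) * τ + η| ^ (2 * s)) volume (3/4) 1 :=
    hcont.intervalIntegrable _ _
  have hsplit : Mker s ξ η =
      (∫ τ in (0:ℝ)..(3/4), |(ξ - η) * τ + η| ^ (2 * s)) +
      ∫ τ in (3/4:ℝ)..1, |(ξ - η) * τ + η| ^ (2 * s) :=
    (intervalIntegral.integral_add_adjacent_intervals hi1 hi2).symm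
  have h1 : (0:ℝ) ≤ ∫ τ in (0:ℝ)..(3/4), |(ξ - η) * τ + η| ^ (2 * s) := by
    apply intervalIntegral.integral_nonneg (by norm_num)
    intro τ _; positivity
  have h2 : (∫ τ in (3/4:ℝ)..1, (|ξ| / 2) ^ (2 * s)) ≤
      ∫ τ in (3/4:ℝ)..1, |(ξ - η) * τ + η| ^ (2 * s) := by
    apply intervalIntegral.integral_mono_on (by norm_num)
      (intervalIntegrable_const) hi2
    intro τ hτ
    apply Real.rpow_le_rpow (by positivity) _ (by positivity)
    have key : (ξ - η) * τ + η = ξ - (ξ - η) * (1 - τ) := by ring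
    rw [key]
    have hτ1 : 3/4 ≤ τ := hτ.1
    have hτ2 : τ ≤ 1 := hτ.2
    have hd : |(ξ - η) * (1 - τ)| ≤ |ξ| / 2 := by
      rw [abs_mul]
      have h1 : |ξ - η| ≤ 2 * |ξ| := by
        calc |ξ - η| ≤ |ξ| + |η| := abs_sub _ _
        _ ≤ 2 * |ξ| := by linarith
      have h2 : |1 - τ| ≤ 1/4 := by rw [abs_le]; constructor <;> linarith
      calc |ξ - η| * |1 - τ| ≤ 2 * |ξ| * (1/4) := by
            apply mul_le_mul h1 h2 (abs_nonneg _) (by positivity)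
        _ = |ξ| / 2 := by ring
    calc |ξ| / 2 = |ξ| - |ξ| / 2 := by ring
      _ ≤ |ξ| - |(ξ - η) * (1 - τ)| := by linarith
      _ ≤ |ξ - (ξ - η) * (1 - τ)| := by
          have := abs_sub_abs_le_abs_sub ξ ((ξ - η) * (1 - τ))
          linarith
  have h3 : (∫ τ in (3/4:ℝ)..1, (|ξ| / 2) ^ (2 * s)) = (1/4) * (|ξ| / 2) ^ (2 * s) := by
    rw [intervalIntegral.integral_const, smul_eq_mul]; norm_num
  rw [hsplit]; rw [h3] at h2; linarith

lemma Mker_ge (s : ℝ) (hs : 0 < s) (hs1 : s < 1) (ξ η : ℝ) :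
    (1/32) * (|ξ| ^ (2 * s) + |η| ^ (2 * s)) ≤ Mker s ξ η := by
  have key : ∀ a b : ℝ, |b| ≤ |a| → (1/32) * (|a| ^ (2 * s) + |b| ^ (2 * s)) ≤ Mker s a b := by
    intro a b hba
    have hlb := Mker_lb s hs hs1 a b hba
    have h1 : |b| ^ (2 * s) ≤ |a| ^ (2 * s) :=
      Real.rpow_le_rpow (abs_nonneg _) hba (by positivity)
    have h2 : (|a| / 2) ^ (2 * s) = |a| ^ (2 * s) / 2 ^ (2 * s) :=
      Real.div_rpow (abs_nonneg a) (by norm_num : (0:ℝ) ≤ 2) (2 * s)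
    have h3 : (2:ℝ) ^ (2 * s) ≤ 4 := by
      calc (2:ℝ) ^ (2 * s) ≤ 2 ^ (2:ℝ) :=
        Real.rpow_le_rpow_of_exponent_le (by norm_num) (by linarith)
      _ = 4 := by norm_num
    have h20 : (0:ℝ) < 2 ^ (2 * s) := by positivity
    have h4 : |a| ^ (2 * s) / 4 ≤ (|a| / 2) ^ (2 * s) := by
      rw [h2]
      exact div_le_div_of_nonneg_left (by positivity) h20 h3
    calc (1/32) * (|a| ^ (2 * s) + |b| ^ (2 * s)) ≤ (1/32) * (2 * |a| ^ (2 * s)) := by nlinarith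
      _ = (1/4) * (|a| ^ (2 * s) / 4) := by ring
      _ ≤ (1/4) * ((|a| / 2) ^ (2 * s)) := by linarith
      _ ≤ Mker s a b := hlb
  rcases le_total |η| |ξ| with h | h
  · exact key ξ η h
  · rw [Mker_symm]
    have := key η ξ h
    linarith [this]

lemma one_dim_key (s : ℝ) (hs : 0 < s) (hs1 : s < 1) (b : ℕ) :
    IntegrableOn (fun x : ℝ => x ^ b * Real.exp (-((1/32) * x ^ (2 * s)))) (Set.Ioi 0) := by
  set p : ℝ := 2 * s with hp
  have hp0 : 0 < p := by positivity
  have hpne : p ≠ 0 := ne_of_gt hp0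
  set q : ℝ := (b + 1) / p - 1 with hq
  have hq1 : -1 < q := by
    have : 0 < (b + 1 : ℝ) / p := by positivity
    simp only [hq]; linarith
  have hrhs : IntegrableOn (fun y : ℝ => y ^ q * Real.exp (-((1/32) * y))) (Set.Ioi 0) := by
    have := integrableOn_rpow_mul_exp_neg_mul_rpow hq1 (by norm_num : (0:ℝ) < 1) (by norm_num : (0:ℝ) < 1/32)
    refine this.congr_fun (fun y hy => ?_) measurableSet_Ioi
    simp only [Real.rpow_one, neg_mul]
  have h := (integrableOn_Ioi_comp_rpow_iff'
    (fun y : ℝ => y ^ q * Real.exp (-((1/32) * y))) hpne).mpr hrhs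
  refine h.congr_fun (fun x hx => ?_) measurableSet_Ioi
  have hx0 : (0:ℝ) < x := hx
  simp only [smul_eq_mul]
  have h1 : (x ^ p) ^ q = x ^ (p * q) := (Real.rpow_mul hx0.le p q).symm
  have h2 : x ^ (p - 1) * x ^ (p * q) = x ^ (p - 1 + p * q) := (Real.rpow_add hx0 _ _).symm
  have h3 : p - 1 + p * q = (b : ℝ) := by
    have hpq : p * (((b : ℝ) + 1) / p) = (b : ℝ) + 1 := by field_simp
    rw [hq, mul_sub, hpq]; ring
  rw [h1, ← mul_assoc, h2, h3, Real.rpow_natCast]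

lemma one_dim_integrable (s : ℝ) (hs : 0 < s) (hs1 : s < 1) (b : ℕ) :
    Integrable (fun x : ℝ => |x| ^ b * Real.exp (-((1/32) * |x| ^ (2 * s)))) := by
  have key := one_dim_key s hs hs1 b
  have keyabs : IntegrableOn (fun x : ℝ => |x| ^ b * Real.exp (-((1/32) * |x| ^ (2 * s))))
      (Set.Ioi 0) := by
    refine key.congr_fun (fun x hx => ?_) measurableSet_Ioi
    rw [abs_of_pos hx]
  rw [← integrableOn_univ, ← @Set.Iio_union_Ici _ _ (0 : ℝ), integrableOn_union,
    integrableOn_Ici_iff_integrableOn_Ioi]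
  refine ⟨?_, keyabs⟩
  rw [← (Measure.measurePreserving_neg (volume : Measure ℝ)).integrableOn_comp_preimage
      (Homeomorph.neg ℝ).measurableEmbedding]
  simp only [Function.comp_def, abs_neg, Set.neg_preimage, Set.neg_Iio, neg_zero]
  exact keyabs

theorem stmt11 (s : ℝ) (hs : 0 < s) (hs1 : s < 1) (b₁ b₂ : ℕ) :
    Integrable (fun p : ℝ × ℝ => |p.1| ^ b₁ * |p.2| ^ b₂ * Real.exp (-(Mker s p.1 p.2))) ∧
    ∃ C > (0:ℝ), ∀ x v : ℝ,
      ‖∫ p : ℝ × ℝ,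
          (p.1 : ℂ) ^ b₁ * (p.2 : ℂ) ^ b₂ * Complex.exp (-(Mker s p.1 p.2 : ℂ)) *
            Complex.exp (-Complex.I * ((p.1 * x + p.2 * v : ℝ) : ℂ))‖ ≤ C := by
  have hInt : Integrable (fun p : ℝ × ℝ =>
      |p.1| ^ b₁ * |p.2| ^ b₂ * Real.exp (-(Mker s p.1 p.2))) := by
    have hg : Integrable (fun p : ℝ × ℝ =>
        (|p.1| ^ b₁ * Real.exp (-((1/32) * |p.1| ^ (2 * s)))) *
        (|p.2| ^ b₂ * Real.exp (-((1/32) * |p.2| ^ (2 * s))))) :=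
      (one_dim_integrable s hs hs1 b₁).mul_prod (one_dim_integrable s hs hs1 b₂)
    apply hg.mono'
    · apply AEStronglyMeasurable.mul
      · apply AEStronglyMeasurable.mul <;>
          exact ((continuous_abs.comp (by fun_prop)).pow _).aestronglyMeasurable
      · exact (Real.continuous_exp.comp (Mker_cont s hs).neg).aestronglyMeasurable
    · filter_upwards with p
      rw [Real.norm_eq_abs, abs_of_nonneg (by positivity)]
      have hM := Mker_ge s hs hs1 p.1 p.2
      have : Real.exp (-(Mker s p.1 p.2)) ≤
          Real.exp (-((1/32) * |p.1| ^ (2 * s))) * Real.exp (-((1/32) * |p.2| ^ (2 * s))) := by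
        rw [← Real.exp_add]
        apply Real.exp_le_exp.mpr
        rw [← neg_add]
        apply neg_le_neg
        calc (1/32) * |p.1| ^ (2*s) + (1/32) * |p.2| ^ (2*s)
            = (1/32) * (|p.1| ^ (2*s) + |p.2| ^ (2*s)) := by ring
          _ ≤ Mker s p.1 p.2 := hM
      calc |p.1| ^ b₁ * |p.2| ^ b₂ * Real.exp (-(Mker s p.1 p.2))
          ≤ |p.1| ^ b₁ * |p.2| ^ b₂ *
            (Real.exp (-((1/32) * |p.1| ^ (2 * s))) * Real.exp (-((1/32) * |p.2| ^ (2 * s)))) := by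
            apply mul_le_mul_of_nonneg_left this (by positivity)
        _ = _ := by ring
  refine ⟨hInt, ?_⟩
  set I := ∫ p : ℝ × ℝ, |p.1| ^ b₁ * |p.2| ^ b₂ * Real.exp (-(Mker s p.1 p.2))
  have hI0 : 0 ≤ I := integral_nonneg fun p => by positivity
  refine ⟨I + 1, by linarith, fun x v => ?_⟩
  calc ‖∫ p : ℝ × ℝ,
          (p.1 : ℂ) ^ b₁ * (p.2 : ℂ) ^ b₂ * Complex.exp (-(Mker s p.1 p.2 : ℂ)) *
            Complex.exp (-Complex.I * ((p.1 * x + p.2 * v : ℝ) : ℂ))‖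
      ≤ ∫ p : ℝ × ℝ, ‖(p.1 : ℂ) ^ b₁ * (p.2 : ℂ) ^ b₂ * Complex.exp (-(Mker s p.1 p.2 : ℂ)) *
            Complex.exp (-Complex.I * ((p.1 * x + p.2 * v : ℝ) : ℂ))‖ :=
        norm_integral_le_integral_norm _
    _ = I := by
        apply integral_congr_ae
        filter_upwards with p
        simp only [norm_mul, norm_pow, Complex.norm_real, Complex.norm_exp,
          Real.norm_eq_abs]
        have h1 : (-(Mker s p.1 p.2 : ℂ)).re = -(Mker s p.1 p.2) := by simp
        have h2 : (-Complex.I * ((p.1 * x + p.2 * v : ℝ) : ℂ)).re = 0 := by simp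
        rw [h1, h2, Real.exp_zero, mul_one]
    _ ≤ I + 1 := by linarith
end

section
/- Let 0 < s < 1 and let m₁, m₂ ∈ ℕ with m₁ + m₂ ≥ 1. Then there exists a constant C > 0 (depending only on s, m₁, m₂) such that for all ξ, η ∈ ℝ with ξ ≠ 0, η ≠ 0 and |ξ − η| ≤ |η|/2: |∂_ξ^{m₁} ∂_η^{m₂} (e^{−M(ξ,η)})| ≤ C · (|ξ| + |η|)^{2s − m₁ − m₂}. -/
open MeasureTheory Real

open Set Filter Topology

open scoped Interval

namespace Stmt18

/-- The good open region. -/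
def Reg (ξ η : ℝ) : Prop := 0 < η ∧ |ξ - η| < 3/4 * η

lemma base_lb {ξ η τ : ℝ} (h : Reg ξ η) (hτ0 : 0 ≤ τ) (hτ1 : τ ≤ 1) :
    η/4 ≤ (ξ - η) * τ + η := by
  obtain ⟨hη, hd⟩ := h
  have h1 := abs_lt.1 hd
  nlinarith [mul_le_mul_of_nonneg_right h1.1.le hτ0, mul_le_mul_of_nonneg_left hτ1 (by linarith : (0:ℝ) ≤ 3/4*η)]

lemma base_ub {ξ η τ : ℝ} (h : Reg ξ η) (hτ0 : 0 ≤ τ) (hτ1 : τ ≤ 1) :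
    (ξ - η) * τ + η ≤ 2 * η := by
  obtain ⟨hη, hd⟩ := h
  have h1 := abs_lt.1 hd
  nlinarith [mul_le_mul_of_nonneg_right h1.2.le hτ0, mul_le_mul_of_nonneg_left hτ1 (by linarith : (0:ℝ) ≤ 3/4*η)]

lemma base_pos {ξ η τ : ℝ} (h : Reg ξ η) (hτ0 : 0 ≤ τ) (hτ1 : τ ≤ 1) :
    0 < (ξ - η) * τ + η :=
  lt_of_lt_of_le (by have := h.1; linarith : (0:ℝ) < η/4) (base_lb h hτ0 hτ1)

lemma rpow_bracket {l x u e : ℝ} (hl : 0 < l) (hlx : l ≤ x) (hxu : x ≤ u) :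
    x ^ e ≤ max (l ^ e) (u ^ e) := by
  rcases le_total 0 e with he | he
  · exact le_max_of_le_right (Real.rpow_le_rpow (by linarith) hxu he)
  · exact le_max_of_le_left (Real.rpow_le_rpow_of_nonpos hl hlx he)

/-- Mixed partial derivative of `M` (with `a` ξ-derivatives and `b` η-derivatives), on `Reg`. -/
noncomputable def DM (s : ℝ) (a b : ℕ) (ξ η : ℝ) : ℝ :=
  (∏ i ∈ Finset.range (a+b), (2*s - i)) *
    ∫ τ in (0:ℝ)..1, τ^a * (1-τ)^b * ((ξ - η) * τ + η) ^ (2*s - (a+b : ℕ))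

lemma integrand_contOn (s : ℝ) (a b : ℕ) (e : ℝ) {ξ η : ℝ} (h : Reg ξ η) :
    ContinuousOn (fun τ : ℝ => τ^a * (1-τ)^b * ((ξ - η) * τ + η) ^ e) (Icc 0 1) := by
  apply ContinuousOn.mul
  · fun_prop
  · apply ContinuousOn.rpow_const
    · fun_prop
    · intro τ hτ
      exact Or.inl (ne_of_gt (base_pos h hτ.1 hτ.2))

lemma integrand_intble (s : ℝ) (a b : ℕ) (e : ℝ) {ξ η : ℝ} (h : Reg ξ η) :
    IntervalIntegrable (fun τ : ℝ => τ^a * (1-τ)^b * ((ξ - η) * τ + η) ^ e) volume 0 1 := by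
  apply ContinuousOn.intervalIntegrable
  rw [uIcc_of_le zero_le_one]
  exact integrand_contOn s a b e h


lemma reg_ball_fst {ξ η : ℝ} (h : Reg ξ η) :
    ∃ ε > 0, ∀ ξ' ∈ Metric.ball ξ ε, Reg ξ' η := by
  obtain ⟨hη, hd⟩ := h
  refine ⟨3/4*η - |ξ - η|, by linarith, fun ξ' hξ' => ⟨hη, ?_⟩⟩
  rw [Metric.mem_ball, Real.dist_eq] at hξ'
  calc |ξ' - η| ≤ |ξ' - ξ| + |ξ - η| := by
        have := abs_sub_le ξ' ξ η; linarith
    _ < 3/4*η := by linarith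

lemma reg_ball_snd {ξ η : ℝ} (h : Reg ξ η) :
    ∃ ε > 0, ∀ η' ∈ Metric.ball η ε, Reg ξ η' := by
  obtain ⟨hη, hd⟩ := h
  have hgap : 0 < 3/4*η - |ξ - η| := by linarith
  refine ⟨(3/4*η - |ξ - η|)/4, by linarith, fun η' hη' => ?_⟩
  rw [Metric.mem_ball, Real.dist_eq] at hη'
  have h4 := abs_lt.1 hη'
  have habs : |ξ - η'| ≤ |ξ - η| + |η - η'| := abs_sub_le ξ η η'
  have h5 : |η - η'| = |η' - η| := abs_sub_comm _ _
  constructor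
  · linarith [abs_nonneg (ξ - η)]
  · have h6 : |η' - η| < (3/4*η - |ξ - η|)/4 := hη'
    linarith [abs_lt.1 h6]

lemma uIoc01 : Ι (0:ℝ) 1 = Ioc 0 1 := by rw [uIoc_of_le zero_le_one]

lemma DM_hasDerivAt_fst (s : ℝ) (a b : ℕ) {ξ η : ℝ} (h : Reg ξ η) :
    HasDerivAt (fun ξ' => DM s a b ξ' η) (DM s (a+1) b ξ η) ξ := by
  obtain ⟨ε, hε, hball⟩ := reg_ball_fst h
  set e : ℝ := 2*s - (a+b : ℕ) with he
  have key := intervalIntegral.hasDerivAt_integral_of_dominated_loc_of_deriv_le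
      (μ := volume) (a := (0:ℝ)) (b := (1:ℝ)) (x₀ := ξ)
      (F := fun ξ' τ => τ^a * (1-τ)^b * ((ξ' - η) * τ + η) ^ e)
      (F' := fun ξ' τ => τ^a * (1-τ)^b * (τ * (e * ((ξ' - η) * τ + η) ^ (e-1))))
      (bound := fun _ => |e| * max ((η/4) ^ (e-1)) ((2*η) ^ (e-1)))
      (Metric.ball_mem_nhds ξ hε) ?_ ?_ ?_ ?_ ?_ ?_
  · -- conclude
    have h2 : HasDerivAt (fun ξ' => DM s a b ξ' η)
        ((∏ i ∈ Finset.range (a+b), (2*s - i)) *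
          ∫ τ in (0:ℝ)..1, τ^a * (1-τ)^b * (τ * (e * ((ξ - η) * τ + η) ^ (e-1)))) ξ :=
      key.2.const_mul _
    convert h2 using 1
    show (∏ i ∈ Finset.range (a+1+b), (2*s - i)) *
      (∫ τ in (0:ℝ)..1, τ^(a+1) * (1-τ)^b * ((ξ - η) * τ + η) ^ (2*s - (a+1+b : ℕ))) = _
    have hprod : (∏ i ∈ Finset.range (a+1+b), (2*s - i))
        = (∏ i ∈ Finset.range (a+b), (2*s - i)) * (2*s - (a+b : ℕ)) := by
      rw [show a+1+b = (a+b)+1 by ring, Finset.prod_range_succ]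
    rw [hprod]
    have hint : (∫ τ in (0:ℝ)..1, τ^a * (1-τ)^b * (τ * (e * ((ξ - η) * τ + η) ^ (e-1))))
        = (2*s - (a+b : ℕ)) * ∫ τ in (0:ℝ)..1, τ^(a+1) * (1-τ)^b * ((ξ - η) * τ + η) ^ (2*s - (a+1+b : ℕ)) := by
      rw [← intervalIntegral.integral_const_mul]
      apply intervalIntegral.integral_congr
      intro τ _
      have hexp : 2*s - (a+1+b : ℕ) = e - 1 := by push_cast [he]; ring
      rw [hexp]
      ring
    rw [hint]; ring
  · -- hF_meas
    obtain ⟨δ, hδ, hδball⟩ := reg_ball_fst h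
    filter_upwards [Metric.ball_mem_nhds ξ hδ] with ξ' hξ'
    exact (((integrand_contOn s a b e (hδball ξ' hξ')).mono (by rw [uIoc01]; exact Ioc_subset_Icc_self)).aestronglyMeasurable measurableSet_uIoc)
  · exact integrand_intble s a b e h
  · -- hF'_meas
    have hco : ContinuousOn (fun τ : ℝ => τ^a * (1-τ)^b * (τ * (e * ((ξ - η) * τ + η) ^ (e-1)))) (Icc 0 1) := by
      have h1 := integrand_contOn s (a+1) b (e-1) h
      have : (fun τ : ℝ => τ^a * (1-τ)^b * (τ * (e * ((ξ - η) * τ + η) ^ (e-1))))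
          = fun τ : ℝ => e * (τ^(a+1) * (1-τ)^b * ((ξ - η) * τ + η) ^ (e-1)) := by
        funext τ; ring
      rw [this]
      exact h1.const_smul e
    exact ((hco.mono (by rw [uIoc01]; exact Ioc_subset_Icc_self)).aestronglyMeasurable measurableSet_uIoc)
  · -- h_bound
    refine Eventually.of_forall fun τ hτ ξ' hξ' => ?_
    rw [uIoc01] at hτ
    have hreg := hball ξ' hξ'
    have hτ0 : 0 ≤ τ := hτ.1.le
    have hτ1 : τ ≤ 1 := hτ.2
    have hb1 : η/4 ≤ (ξ' - η) * τ + η := base_lb hreg hτ0 hτ1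
    have hb2 : (ξ' - η) * τ + η ≤ 2*η := base_ub hreg hτ0 hτ1
    have hpos : (0:ℝ) < η/4 := by have := hreg.1; linarith
    have hX : ((ξ' - η) * τ + η) ^ (e-1) ≤ max ((η/4) ^ (e-1)) ((2*η) ^ (e-1)) :=
      rpow_bracket hpos hb1 hb2
    have hXpos : (0:ℝ) ≤ ((ξ' - η) * τ + η) ^ (e-1) := Real.rpow_nonneg (by linarith) _
    have h1 : τ^a ≤ 1 := pow_le_one₀ hτ0 hτ1
    have h2 : (1-τ)^b ≤ 1 := pow_le_one₀ (by linarith) (by linarith)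
    have h1' : (0:ℝ) ≤ τ^a := pow_nonneg hτ0 a
    have h2' : (0:ℝ) ≤ (1-τ)^b := pow_nonneg (by linarith) b
    have hMpos : (0:ℝ) ≤ max ((η/4) ^ (e-1)) ((2*η) ^ (e-1)) := le_trans hXpos hX
    rw [Real.norm_eq_abs, abs_mul, abs_mul, abs_mul, abs_mul]
    rw [abs_of_nonneg h1', abs_of_nonneg h2', abs_of_nonneg hτ0, abs_of_nonneg hXpos]
    calc τ^a * (1-τ)^b * (τ * (|e| * ((ξ' - η) * τ + η) ^ (e-1)))
        ≤ 1 * 1 * (1 * (|e| * max ((η/4) ^ (e-1)) ((2*η) ^ (e-1)))) := by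
          gcongr <;> first | exact hX | positivity | exact mul_nonneg (abs_nonneg e) hXpos
      _ = |e| * max ((η/4) ^ (e-1)) ((2*η) ^ (e-1)) := by ring
  · exact intervalIntegrable_const
  · -- h_diff
    refine Eventually.of_forall fun τ hτ ξ' hξ' => ?_
    rw [uIoc01] at hτ
    have hreg := hball ξ' hξ'
    have hbase : ((ξ' - η) * τ + η) ≠ 0 := ne_of_gt (base_pos hreg hτ.1.le hτ.2)
    have haff : HasDerivAt (fun x : ℝ => (x - η) * τ + η) τ ξ' := by
      simpa using (((hasDerivAt_id ξ').sub_const η).mul_const τ).add_const η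
    have hr := (haff.rpow_const (p := e) (Or.inl hbase)).const_mul (τ^a * (1-τ)^b)
    refine hr.congr_deriv (Eq.symm ?_)
    ring


lemma DM_hasDerivAt_snd (s : ℝ) (a b : ℕ) {ξ η : ℝ} (h : Reg ξ η) :
    HasDerivAt (fun η' => DM s a b ξ η') (DM s a (b+1) ξ η) η := by
  obtain ⟨ε₀, hε₀, hball₀⟩ := reg_ball_snd h
  have hη0 := h.1
  set ε := min ε₀ (η/2) with hεdef
  have hε : 0 < ε := lt_min hε₀ (by linarith)
  have hball : ∀ η' ∈ Metric.ball η ε, Reg ξ η' ∧ η/2 < η' ∧ η' < 3/2*η := by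
    intro η' hη'
    rw [Metric.mem_ball, Real.dist_eq] at hη'
    have h1 : |η' - η| < ε₀ := lt_of_lt_of_le hη' (min_le_left _ _)
    have h2 := abs_lt.1 (lt_of_lt_of_le hη' (min_le_right _ _))
    exact ⟨hball₀ η' (by rwa [Metric.mem_ball, Real.dist_eq]), by linarith [h2.1], by linarith [h2.2]⟩
  set e : ℝ := 2*s - (a+b : ℕ) with he
  have key := intervalIntegral.hasDerivAt_integral_of_dominated_loc_of_deriv_le
      (μ := volume) (a := (0:ℝ)) (b := (1:ℝ)) (x₀ := η)
      (F := fun η' τ => τ^a * (1-τ)^b * ((ξ - η') * τ + η') ^ e)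
      (F' := fun η' τ => τ^a * (1-τ)^b * ((1-τ) * (e * ((ξ - η') * τ + η') ^ (e-1))))
      (bound := fun _ => |e| * max ((η/8) ^ (e-1)) ((4*η) ^ (e-1)))
      (Metric.ball_mem_nhds η hε) ?_ ?_ ?_ ?_ ?_ ?_
  · -- conclude
    have h2 : HasDerivAt (fun η' => DM s a b ξ η')
        ((∏ i ∈ Finset.range (a+b), (2*s - i)) *
          ∫ τ in (0:ℝ)..1, τ^a * (1-τ)^b * ((1-τ) * (e * ((ξ - η) * τ + η) ^ (e-1)))) η :=
      key.2.const_mul _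
    convert h2 using 1
    show (∏ i ∈ Finset.range (a+(b+1)), (2*s - i)) *
      (∫ τ in (0:ℝ)..1, τ^a * (1-τ)^(b+1) * ((ξ - η) * τ + η) ^ (2*s - (a+(b+1) : ℕ))) = _
    have hprod : (∏ i ∈ Finset.range (a+(b+1)), (2*s - i))
        = (∏ i ∈ Finset.range (a+b), (2*s - i)) * (2*s - (a+b : ℕ)) := by
      rw [show a+(b+1) = (a+b)+1 by ring, Finset.prod_range_succ]
    rw [hprod]
    have hint : (∫ τ in (0:ℝ)..1, τ^a * (1-τ)^b * ((1-τ) * (e * ((ξ - η) * τ + η) ^ (e-1))))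
        = (2*s - (a+b : ℕ)) * ∫ τ in (0:ℝ)..1, τ^a * (1-τ)^(b+1) * ((ξ - η) * τ + η) ^ (2*s - (a+(b+1) : ℕ)) := by
      rw [← intervalIntegral.integral_const_mul]
      apply intervalIntegral.integral_congr
      intro τ _
      have hexp : 2*s - (a+(b+1) : ℕ) = e - 1 := by push_cast [he]; ring
      rw [hexp]
      ring
    rw [hint]; ring
  · -- hF_meas
    obtain ⟨δ, hδ, hδball⟩ := reg_ball_snd h
    filter_upwards [Metric.ball_mem_nhds η hδ] with η' hη'
    exact (((integrand_contOn s a b e (hδball η' hη')).mono (by rw [uIoc01]; exact Ioc_subset_Icc_self)).aestronglyMeasurable measurableSet_uIoc)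
  · exact integrand_intble s a b e h
  · -- hF'_meas
    have hco : ContinuousOn (fun τ : ℝ => τ^a * (1-τ)^b * ((1-τ) * (e * ((ξ - η) * τ + η) ^ (e-1)))) (Icc 0 1) := by
      have h1 := integrand_contOn s a (b+1) (e-1) h
      have : (fun τ : ℝ => τ^a * (1-τ)^b * ((1-τ) * (e * ((ξ - η) * τ + η) ^ (e-1))))
          = fun τ : ℝ => e * (τ^a * (1-τ)^(b+1) * ((ξ - η) * τ + η) ^ (e-1)) := by
        funext τ; ring
      rw [this]
      exact h1.const_smul e
    exact ((hco.mono (by rw [uIoc01]; exact Ioc_subset_Icc_self)).aestronglyMeasurable measurableSet_uIoc)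
  · -- h_bound
    refine Eventually.of_forall fun τ hτ η' hη' => ?_
    rw [uIoc01] at hτ
    obtain ⟨hreg, hlo, hhi⟩ := hball η' hη'
    have hτ0 : 0 ≤ τ := hτ.1.le
    have hτ1 : τ ≤ 1 := hτ.2
    have hb1 : η/8 ≤ (ξ - η') * τ + η' := le_trans (by linarith) (base_lb hreg hτ0 hτ1)
    have hb2 : (ξ - η') * τ + η' ≤ 4*η := le_trans (base_ub hreg hτ0 hτ1) (by linarith)
    have hpos : (0:ℝ) < η/8 := by linarith
    have hX : ((ξ - η') * τ + η') ^ (e-1) ≤ max ((η/8) ^ (e-1)) ((4*η) ^ (e-1)) :=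
      rpow_bracket hpos hb1 hb2
    have hXpos : (0:ℝ) ≤ ((ξ - η') * τ + η') ^ (e-1) := Real.rpow_nonneg (by linarith) _
    have h1 : τ^a ≤ 1 := pow_le_one₀ hτ0 hτ1
    have h2 : (1-τ)^b ≤ 1 := pow_le_one₀ (by linarith) (by linarith)
    have h1' : (0:ℝ) ≤ τ^a := pow_nonneg hτ0 a
    have h2' : (0:ℝ) ≤ (1-τ)^b := pow_nonneg (by linarith) b
    have hMpos : (0:ℝ) ≤ max ((η/8) ^ (e-1)) ((4*η) ^ (e-1)) := le_trans hXpos hX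
    rw [Real.norm_eq_abs, abs_mul, abs_mul, abs_mul, abs_mul]
    rw [abs_of_nonneg h1', abs_of_nonneg h2', abs_of_nonneg (by linarith : (0:ℝ) ≤ 1-τ), abs_of_nonneg hXpos]
    calc τ^a * (1-τ)^b * ((1-τ) * (|e| * ((ξ - η') * τ + η') ^ (e-1)))
        ≤ 1 * 1 * (1 * (|e| * max ((η/8) ^ (e-1)) ((4*η) ^ (e-1)))) := by
          gcongr <;> first | exact hX | positivity | exact mul_nonneg (abs_nonneg e) hXpos | linarith | exact mul_nonneg (by linarith : (0:ℝ) ≤ 1-τ) (mul_nonneg (abs_nonneg e) hXpos)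
      _ = |e| * max ((η/8) ^ (e-1)) ((4*η) ^ (e-1)) := by ring
  · exact intervalIntegrable_const
  · -- h_diff
    refine Eventually.of_forall fun τ hτ η' hη' => ?_
    rw [uIoc01] at hτ
    have hreg := (hball η' hη').1
    have hbase : ((ξ - η') * τ + η') ≠ 0 := ne_of_gt (base_pos hreg hτ.1.le hτ.2)
    have haff : HasDerivAt (fun y : ℝ => (ξ - y) * τ + y) (1-τ) η' := by
      have := (((hasDerivAt_id η').const_sub ξ).mul_const τ).add (hasDerivAt_id η')
      exact this.congr_deriv (by ring)
    have hr := (haff.rpow_const (p := e) (Or.inl hbase)).const_mul (τ^a * (1-τ)^b)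
    refine hr.congr_deriv (Eq.symm ?_)
    ring

/-- Uniform bound on the derivatives of `M` on the region. -/
lemma DM_bound (s : ℝ) (a b : ℕ) :
    ∃ K > 0, ∀ ξ η : ℝ, Reg ξ η → |DM s a b ξ η| ≤ K * η ^ (2*s - (a+b : ℕ)) := by
  set e : ℝ := 2*s - (a+b : ℕ) with he
  set c : ℝ := ∏ i ∈ Finset.range (a+b), (2*s - i) with hc
  refine ⟨(|c| + 1) * max ((1/4 : ℝ) ^ e) ((2:ℝ) ^ e), by positivity, fun ξ η h => ?_⟩
  have hη := h.1
  have hb : ∀ τ ∈ Ι (0:ℝ) 1, ‖τ^a * (1-τ)^b * ((ξ - η) * τ + η) ^ e‖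
      ≤ max (((1/4)*η) ^ e) ((2*η) ^ e) := by
    intro τ hτ
    rw [uIoc01] at hτ
    have hτ0 : 0 ≤ τ := hτ.1.le
    have hτ1 : τ ≤ 1 := hτ.2
    have hX : ((ξ - η) * τ + η) ^ e ≤ max (((1/4)*η) ^ e) ((2*η) ^ e) :=
      rpow_bracket (by linarith) (by have := base_lb h hτ0 hτ1; linarith) (base_ub h hτ0 hτ1)
    have hXpos : (0:ℝ) ≤ ((ξ - η) * τ + η) ^ e := Real.rpow_nonneg (le_of_lt (base_pos h hτ0 hτ1)) _
    rw [Real.norm_eq_abs, abs_mul, abs_mul, abs_of_nonneg (pow_nonneg hτ0 a),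
      abs_of_nonneg (pow_nonneg (by linarith : (0:ℝ) ≤ 1-τ) b), abs_of_nonneg hXpos]
    calc τ^a * (1-τ)^b * ((ξ - η) * τ + η) ^ e ≤ 1 * 1 * max (((1/4)*η) ^ e) ((2*η) ^ e) := by
          gcongr <;>
            first
              | exact hX
              | exact pow_le_one₀ hτ0 hτ1
              | exact pow_le_one₀ (by linarith : (0:ℝ) ≤ 1-τ) (by linarith)
              | exact pow_nonneg hτ0 a
              | exact pow_nonneg (by linarith : (0:ℝ) ≤ 1-τ) b
              | positivity
      _ = max (((1/4)*η) ^ e) ((2*η) ^ e) := by ring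
  have hI := intervalIntegral.norm_integral_le_of_norm_le_const hb
  simp only [sub_zero, abs_one, mul_one] at hI
  have hmax : max (((1/4)*η) ^ e) ((2*η) ^ e) = max ((1/4 : ℝ) ^ e) ((2:ℝ) ^ e) * η ^ e := by
    rw [Real.mul_rpow (by norm_num) hη.le, Real.mul_rpow (by norm_num) hη.le,
      max_mul_of_nonneg _ _ (Real.rpow_nonneg hη.le e)]
  rw [DM, ← he, ← hc, abs_mul]
  calc |c| * |∫ τ in (0:ℝ)..1, τ^a * (1-τ)^b * ((ξ - η) * τ + η) ^ e|
      ≤ |c| * (max ((1/4 : ℝ) ^ e) ((2:ℝ) ^ e) * η ^ e) := by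
        rw [← hmax]
        exact mul_le_mul_of_nonneg_left (by simpa [Real.norm_eq_abs] using hI) (abs_nonneg c)
    _ ≤ (|c| + 1) * max ((1/4 : ℝ) ^ e) ((2:ℝ) ^ e) * η ^ e := by
        have h1 : (0:ℝ) < max ((1/4 : ℝ) ^ e) ((2:ℝ) ^ e) :=
          lt_max_of_lt_left (Real.rpow_pos_of_pos (by norm_num) e)
        have h2 : (0:ℝ) < η ^ e := Real.rpow_pos_of_pos hη e
        nlinarith [abs_nonneg c]
    _ = (|c| + 1) * max ((1/4 : ℝ) ^ e) ((2:ℝ) ^ e) * η ^ e := rfl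

/-- Lower bound on `M`. -/
lemma DM00_lb {s : ℝ} (hs : 0 < s) {ξ η : ℝ} (h : Reg ξ η) : ((1/4)*η) ^ (2*s) ≤ DM s 0 0 ξ η := by
  have hη := h.1
  have h0 : DM s 0 0 ξ η = ∫ τ in (0:ℝ)..1, τ^0 * (1-τ)^0 * ((ξ - η) * τ + η) ^ (2*s - ((0+0 : ℕ) : ℝ)) := by
    simp [DM]
  rw [DM]
  simp only [Nat.add_zero, Finset.range_zero, Finset.prod_empty, one_mul]
  have hmono := intervalIntegral.integral_mono_on (a := (0:ℝ)) (b := 1)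
    (f := fun _ : ℝ => ((1/4)*η) ^ (2*s)) zero_le_one intervalIntegrable_const
    (integrand_intble s 0 0 (2*s - ((0+0:ℕ):ℝ)) h) ?_
  · have : (∫ _ in (0:ℝ)..1, ((1/4)*η) ^ (2*s)) = ((1/4)*η) ^ (2*s) := by simp
    rw [this] at hmono
    refine le_trans hmono (le_of_eq ?_)
    apply intervalIntegral.integral_congr
    intro τ _
    norm_num
  · intro τ hτ
    have h1 : ((1/4)*η) ^ (2*s) ≤ ((ξ - η) * τ + η) ^ (2*s - ((0+0:ℕ):ℝ)) := by
      norm_num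
      exact Real.rpow_le_rpow (by positivity) (by have := base_lb h hτ.1 hτ.2; linarith) (by linarith)
    simpa using h1

lemma Mker_eq_DM (s : ℝ) {ξ η : ℝ} (h : Reg ξ η) : Mker s ξ η = DM s 0 0 ξ η := by
  rw [Mker, DM]
  simp only [Nat.add_zero, Finset.range_zero, Finset.prod_empty, one_mul]
  apply intervalIntegral.integral_congr
  intro τ hτ
  rw [uIcc_of_le zero_le_one] at hτ
  show |(ξ - η) * τ + η| ^ (2*s) = τ^0 * (1-τ)^0 * ((ξ - η) * τ + η) ^ (2*s - ((0+0 : ℕ) : ℝ))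
  rw [abs_of_pos (base_pos h hτ.1 hτ.2)]
  norm_num

/-! ### Formal polynomials in the partial derivatives of M -/

noncomputable def evalMono (s : ℝ) (m : List (ℕ × ℕ)) (ξ η : ℝ) : ℝ :=
  (m.map fun p => DM s p.1 p.2 ξ η).prod

def dMono (u : ℕ × ℕ) : List (ℕ × ℕ) → List (List (ℕ × ℕ))
  | [] => []
  | p :: t => ((p.1 + u.1, p.2 + u.2) :: t) :: (dMono u t).map (p :: ·)

noncomputable def evalD (s : ℝ) (L : List (List (ℕ × ℕ))) (ξ η : ℝ) : ℝ :=
  (L.map fun m => evalMono s m ξ η).sum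

noncomputable def evalPoly (s : ℝ) (P : List (ℝ × List (ℕ × ℕ))) (ξ η : ℝ) : ℝ :=
  (P.map fun cm => cm.1 * evalMono s cm.2 ξ η).sum

def dPoly (u : ℕ × ℕ) (P : List (ℝ × List (ℕ × ℕ))) : List (ℝ × List (ℕ × ℕ)) :=
  P.flatMap fun cm => (-cm.1, u :: cm.2) :: (dMono u cm.2).map fun m => (cm.1, m)

def PP : ℕ → ℕ → List (ℝ × List (ℕ × ℕ))
  | 0, 0 => [(1, [])]
  | 0, b+1 => dPoly (0,1) (PP 0 b)
  | a+1, b => dPoly (1,0) (PP a b)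

noncomputable def EE (s : ℝ) (a b : ℕ) (ξ η : ℝ) : ℝ :=
  Real.exp (-(DM s 0 0 ξ η)) * evalPoly s (PP a b) ξ η

lemma evalMono_hasDerivAt_fst (s : ℝ) (m : List (ℕ × ℕ)) {ξ η : ℝ} (h : Reg ξ η) :
    HasDerivAt (fun ξ' => evalMono s m ξ' η) (evalD s (dMono (1,0) m) ξ η) ξ := by
  induction m with
  | nil => simp only [evalMono, dMono, evalD, List.map_nil, List.prod_nil, List.sum_nil]
           exact hasDerivAt_const ξ 1
  | cons p t ih =>
    have hd := (DM_hasDerivAt_fst s p.1 p.2 h).mul ih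
    have : (fun ξ' => evalMono s (p :: t) ξ' η)
        = fun ξ' => DM s p.1 p.2 ξ' η * evalMono s t ξ' η := by
      funext ξ'; simp [evalMono]
    rw [this]
    refine hd.congr_deriv (Eq.symm ?_)
    simp only [dMono, evalD, List.map_cons, List.sum_cons, List.map_map]
    have : ((dMono (1,0) t).map ((fun m => evalMono s m ξ η) ∘ (p :: ·))).sum
        = DM s p.1 p.2 ξ η * evalD s (dMono (1,0) t) ξ η := by
      rw [show ((fun m => evalMono s m ξ η) ∘ (p :: ·)) = fun m => DM s p.1 p.2 ξ η * evalMono s m ξ η by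
        funext m; simp [evalMono], List.sum_map_mul_left]
      rfl
    rw [this]
    simp only [evalMono, evalD, List.map_cons, List.prod_cons]
    ring_nf

lemma evalMono_hasDerivAt_snd (s : ℝ) (m : List (ℕ × ℕ)) {ξ η : ℝ} (h : Reg ξ η) :
    HasDerivAt (fun η' => evalMono s m ξ η') (evalD s (dMono (0,1) m) ξ η) η := by
  induction m with
  | nil => simp only [evalMono, dMono, evalD, List.map_nil, List.prod_nil, List.sum_nil]
           exact hasDerivAt_const η 1
  | cons p t ih =>
    have hd := (DM_hasDerivAt_snd s p.1 p.2 h).mul ih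
    have : (fun η' => evalMono s (p :: t) ξ η')
        = fun η' => DM s p.1 p.2 ξ η' * evalMono s t ξ η' := by
      funext η'; simp [evalMono]
    rw [this]
    refine hd.congr_deriv (Eq.symm ?_)
    simp only [dMono, evalD, List.map_cons, List.sum_cons, List.map_map]
    have : ((dMono (0,1) t).map ((fun m => evalMono s m ξ η) ∘ (p :: ·))).sum
        = DM s p.1 p.2 ξ η * evalD s (dMono (0,1) t) ξ η := by
      rw [show ((fun m => evalMono s m ξ η) ∘ (p :: ·)) = fun m => DM s p.1 p.2 ξ η * evalMono s m ξ η by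
        funext m; simp [evalMono], List.sum_map_mul_left]
      rfl
    rw [this]
    simp only [evalMono, evalD, List.map_cons, List.prod_cons]
    ring_nf

/-- evaluation of the formal derivative of a polynomial. -/
lemma evalPoly_dPoly (s : ℝ) (u : ℕ × ℕ) (P : List (ℝ × List (ℕ × ℕ))) (ξ η : ℝ) :
    evalPoly s (dPoly u P) ξ η
      = -(DM s u.1 u.2 ξ η) * evalPoly s P ξ η
        + (P.map fun cm => cm.1 * evalD s (dMono u cm.2) ξ η).sum := by
  induction P with
  | nil => simp [evalPoly, dPoly]
  | cons cm P' ih =>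
    rw [dPoly, List.flatMap_cons]
    rw [evalPoly, List.map_append, List.sum_append]
    have h1 : ((((-cm.1, u :: cm.2) :: (dMono u cm.2).map fun m => (cm.1, m)).map
        fun cm' => cm'.1 * evalMono s cm'.2 ξ η)).sum
        = -cm.1 * (DM s u.1 u.2 ξ η * evalMono s cm.2 ξ η)
          + cm.1 * evalD s (dMono u cm.2) ξ η := by
      simp only [List.map_cons, List.sum_cons, List.map_map]
      have hcomp : ((fun cm' : ℝ × List (ℕ × ℕ) => cm'.1 * evalMono s cm'.2 ξ η) ∘ fun m => (cm.1, m))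
          = fun m => cm.1 * evalMono s m ξ η := rfl
      rw [hcomp, List.sum_map_mul_left]
      have h3 : evalMono s (u :: cm.2) ξ η = DM s u.1 u.2 ξ η * evalMono s cm.2 ξ η := by
        simp [evalMono]
      have h4 : (List.map (fun m => evalMono s m ξ η) (dMono u cm.2)).sum
          = evalD s (dMono u cm.2) ξ η := rfl
      show (-cm.1) * evalMono s (u :: cm.2) ξ η
          + cm.1 * (List.map (fun m => evalMono s m ξ η) (dMono u cm.2)).sum = _
      rw [h3, h4]
    rw [h1]
    have h2 : ((P'.flatMap fun cm =>
        (-cm.1, u :: cm.2) :: (dMono u cm.2).map fun m => (cm.1, m)).map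
          fun cm' => cm'.1 * evalMono s cm'.2 ξ η).sum = evalPoly s (dPoly u P') ξ η := rfl
    rw [h2, ih]
    simp only [evalPoly, List.map_cons, List.sum_cons]
    ring

lemma evalPoly_hasDerivAt_fst (s : ℝ) (P : List (ℝ × List (ℕ × ℕ))) {ξ η : ℝ} (h : Reg ξ η) :
    HasDerivAt (fun ξ' => evalPoly s P ξ' η)
      ((P.map fun cm => cm.1 * evalD s (dMono (1,0) cm.2) ξ η).sum) ξ := by
  induction P with
  | nil => simp only [evalPoly, List.map_nil, List.sum_nil]; exact hasDerivAt_const ξ 0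
  | cons cm P' ih =>
    have hd := ((evalMono_hasDerivAt_fst s cm.2 h).const_mul cm.1).add ih
    have : (fun ξ' => evalPoly s (cm :: P') ξ' η)
        = fun ξ' => cm.1 * evalMono s cm.2 ξ' η + evalPoly s P' ξ' η := by
      funext ξ'; simp [evalPoly]
    rw [this]
    exact hd.congr_deriv (by simp)

lemma evalPoly_hasDerivAt_snd (s : ℝ) (P : List (ℝ × List (ℕ × ℕ))) {ξ η : ℝ} (h : Reg ξ η) :
    HasDerivAt (fun η' => evalPoly s P ξ η')
      ((P.map fun cm => cm.1 * evalD s (dMono (0,1) cm.2) ξ η).sum) η := by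
  induction P with
  | nil => simp only [evalPoly, List.map_nil, List.sum_nil]; exact hasDerivAt_const η 0
  | cons cm P' ih =>
    have hd := ((evalMono_hasDerivAt_snd s cm.2 h).const_mul cm.1).add ih
    have : (fun η' => evalPoly s (cm :: P') ξ η')
        = fun η' => cm.1 * evalMono s cm.2 ξ η' + evalPoly s P' ξ η' := by
      funext η'; simp [evalPoly]
    rw [this]
    exact hd.congr_deriv (by simp)

lemma EE_hasDerivAt_fst (s : ℝ) (a b : ℕ) {ξ η : ℝ} (h : Reg ξ η) :
    HasDerivAt (fun ξ' => EE s a b ξ' η) (EE s (a+1) b ξ η) ξ := by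
  have hexp : HasDerivAt (fun ξ' => Real.exp (-(DM s 0 0 ξ' η)))
      (Real.exp (-(DM s 0 0 ξ η)) * (-(DM s 1 0 ξ η))) ξ := by
    have := ((DM_hasDerivAt_fst s 0 0 h).neg).exp
    simpa using this
  have hd := hexp.mul (evalPoly_hasDerivAt_fst s (PP a b) h)
  have hPP : PP (a+1) b = dPoly (1,0) (PP a b) := by
    cases b <;> rw [PP]
  have : (fun ξ' => EE s a b ξ' η)
      = fun ξ' => Real.exp (-(DM s 0 0 ξ' η)) * evalPoly s (PP a b) ξ' η := rfl
  rw [this]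
  refine hd.congr_deriv (Eq.symm ?_)
  rw [EE, hPP, evalPoly_dPoly]
  ring

lemma EE_hasDerivAt_snd (s : ℝ) (b : ℕ) {ξ η : ℝ} (h : Reg ξ η) :
    HasDerivAt (fun η' => EE s 0 b ξ η') (EE s 0 (b+1) ξ η) η := by
  have hexp : HasDerivAt (fun η' => Real.exp (-(DM s 0 0 ξ η')))
      (Real.exp (-(DM s 0 0 ξ η)) * (-(DM s 0 1 ξ η))) η := by
    have := ((DM_hasDerivAt_snd s 0 0 h).neg).exp
    simpa using this
  have hd := hexp.mul (evalPoly_hasDerivAt_snd s (PP 0 b) h)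
  have hPP : PP 0 (b+1) = dPoly (0,1) (PP 0 b) := by rw [PP]
  have : (fun η' => EE s 0 b ξ η')
      = fun η' => Real.exp (-(DM s 0 0 ξ η')) * evalPoly s (PP 0 b) ξ η' := rfl
  rw [this]
  refine hd.congr_deriv (Eq.symm ?_)
  rw [EE, hPP, evalPoly_dPoly]
  ring

/-- total degree of a monomial -/
def degM (m : List (ℕ × ℕ)) : ℕ := (m.map fun p => p.1 + p.2).sum

lemma dMono_mem {u : ℕ × ℕ} {m m' : List (ℕ × ℕ)} (h : m' ∈ dMono u m) :
    degM m' = degM m + (u.1 + u.2) ∧ m'.length = m.length := by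
  induction m generalizing m' with
  | nil => simp [dMono] at h
  | cons p t ih =>
    rw [dMono] at h
    rcases List.mem_cons.1 h with rfl | h
    · constructor
      · simp [degM]; ring
      · simp
    · obtain ⟨m'', hm'', rfl⟩ := List.mem_map.1 h
      obtain ⟨h1, h2⟩ := ih hm''
      constructor
      · simp only [degM, List.map_cons, List.sum_cons] at *
        omega
      · simp only [List.length_cons] at *
        omega

lemma PP_mem (a b : ℕ) : ∀ cm ∈ PP a b,
    (cm.1 = 1 ∨ cm.1 = -1) ∧ degM cm.2 = a + b ∧ (1 ≤ a + b → cm.2 ≠ []) := by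
  have key : ∀ (u : ℕ × ℕ) (P : List (ℝ × List (ℕ × ℕ))) (d : ℕ), u.1 + u.2 = 1 →
      (∀ cm ∈ P, (cm.1 = 1 ∨ cm.1 = -1) ∧ degM cm.2 = d) →
      ∀ cm ∈ dPoly u P, (cm.1 = 1 ∨ cm.1 = -1) ∧ degM cm.2 = d + 1 ∧ cm.2 ≠ [] := by
    intro u P d hu hP cm hcm
    rw [dPoly, List.mem_flatMap] at hcm
    obtain ⟨cm', hcm', hmem⟩ := hcm
    obtain ⟨hc', hd'⟩ := hP cm' hcm'
    rcases List.mem_cons.1 hmem with rfl | hmem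
    · refine ⟨?_, ?_, by simp⟩
      · rcases hc' with h | h <;> simp [h]
      · simp only [degM, List.map_cons, List.sum_cons]
        simp only [degM] at hd'
        omega
    · obtain ⟨m'', hm'', rfl⟩ := List.mem_map.1 hmem
      obtain ⟨h1, h2⟩ := dMono_mem hm''
      refine ⟨hc', by rw [h1, hd', hu], ?_⟩
      intro hnil
      have hnil' : m'' = [] := hnil
      have hlen : cm'.2.length = 0 := by
        rw [← h2, hnil']; rfl
      have : cm'.2 = [] := List.length_eq_zero_iff.1 hlen
      rw [this] at hm''
      simp [dMono] at hm''
  induction a with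
  | zero =>
    induction b with
    | zero =>
      intro cm hcm
      rw [PP] at hcm
      simp at hcm
      rw [hcm]
      refine ⟨Or.inl rfl, rfl, by simp⟩
    | succ b ihb =>
      have h0 : PP 0 (b+1) = dPoly (0,1) (PP 0 b) := by rw [PP]
      rw [h0]
      intro cm hcm
      obtain ⟨h1, h2, h3⟩ := key (0,1) (PP 0 b) b rfl
        (fun cm' hcm' => ⟨(ihb cm' hcm').1, by simpa using (ihb cm' hcm').2.1⟩) cm hcm
      exact ⟨h1, by omega, fun _ => h3⟩
  | succ a iha =>
    have h0 : PP (a+1) b = dPoly (1,0) (PP a b) := by cases b <;> rw [PP]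
    rw [h0]
    intro cm hcm
    obtain ⟨h1, h2, h3⟩ := key (1,0) (PP a b) (a+b) rfl
      (fun cm' hcm' => ⟨(iha cm' hcm').1, (iha cm' hcm').2.1⟩) cm hcm
    exact ⟨h1, by omega, fun _ => h3⟩

lemma exp_poly_bound (p : ℕ) {u : ℝ} (hu : 0 ≤ u) :
    Real.exp (-u) * u ^ p ≤ p.factorial := by
  have h1 : u ^ p / p.factorial ≤ Real.exp u := by
    calc u ^ p / p.factorial ≤ ∑ i ∈ Finset.range (p+1), u ^ i / i.factorial := by
          refine Finset.single_le_sum (f := fun i => u ^ i / (i.factorial : ℝ)) ?_ ?_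
          · intro i _; positivity
          · simp
      _ ≤ Real.exp u := Real.sum_le_exp_of_nonneg hu _
  have h2 : u ^ p ≤ p.factorial * Real.exp u := by
    have hp : (0:ℝ) < p.factorial := by positivity
    rw [div_le_iff₀ hp] at h1
    linarith [h1]
  calc Real.exp (-u) * u ^ p ≤ Real.exp (-u) * (p.factorial * Real.exp u) := by
        exact mul_le_mul_of_nonneg_left h2 (Real.exp_nonneg _)
    _ = p.factorial * (Real.exp (-u) * Real.exp u) := by ring
    _ = p.factorial := by rw [← Real.exp_add]; simp

lemma evalMono_bound (s : ℝ) (m : List (ℕ × ℕ)) :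
    ∃ K > 0, ∀ ξ η : ℝ, Reg ξ η →
      |evalMono s m ξ η| ≤ K * η ^ (2*s*m.length - (degM m : ℕ)) := by
  induction m with
  | nil =>
    refine ⟨1, one_pos, fun ξ η h => ?_⟩
    simp [evalMono, degM]
  | cons p t ih =>
    obtain ⟨K1, hK1, hb1⟩ := DM_bound s p.1 p.2
    obtain ⟨K2, hK2, hb2⟩ := ih
    refine ⟨K1 * K2, by positivity, fun ξ η h => ?_⟩
    have hη := h.1
    have hsplit : evalMono s (p :: t) ξ η = DM s p.1 p.2 ξ η * evalMono s t ξ η := by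
      simp [evalMono]
    rw [hsplit, abs_mul]
    calc |DM s p.1 p.2 ξ η| * |evalMono s t ξ η|
        ≤ (K1 * η ^ (2*s - (p.1+p.2 : ℕ))) * (K2 * η ^ (2*s*t.length - (degM t : ℕ))) := by
          exact mul_le_mul (hb1 ξ η h) (hb2 ξ η h) (abs_nonneg _)
            (by positivity)
      _ = K1 * K2 * (η ^ (2*s - (p.1+p.2 : ℕ)) * η ^ (2*s*t.length - (degM t : ℕ))) := by ring
      _ = K1 * K2 * η ^ (2*s*(p :: t).length - (degM (p :: t) : ℕ)) := by
          rw [← Real.rpow_add hη]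
          have heq : (2*s - ((p.1+p.2 : ℕ) : ℝ)) + (2*s*t.length - ((degM t : ℕ) : ℝ))
              = 2*s*((p :: t).length : ℝ) - ((degM (p :: t) : ℕ) : ℝ) := by
            simp only [List.length_cons, degM, List.map_cons, List.sum_cons]
            push_cast
            ring
          rw [heq]

lemma poly_term_bound (s : ℝ) (hs : 0 < s) (m : List (ℕ × ℕ)) (hm : m ≠ []) :
    ∃ C > 0, ∀ ξ η : ℝ, Reg ξ η →
      Real.exp (-(DM s 0 0 ξ η)) * |evalMono s m ξ η| ≤ C * η ^ (2*s - (degM m : ℕ)) := by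
  obtain ⟨K, hK, hKb⟩ := evalMono_bound s m
  obtain ⟨p, hp⟩ : ∃ p, m.length = p + 1 :=
    Nat.exists_eq_succ_of_ne_zero (by simpa using hm)
  refine ⟨K * (4 ^ (2*s)) ^ p * p.factorial, by positivity, fun ξ η h => ?_⟩
  have hη := h.1
  set v : ℝ := ((1/4)*η) ^ (2*s) with hv
  have hv0 : 0 < v := Real.rpow_pos_of_pos (by linarith) _
  have hexp : Real.exp (-(DM s 0 0 ξ η)) ≤ Real.exp (-v) := by
    rw [Real.exp_le_exp]
    exact neg_le_neg (DM00_lb hs h)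
  have hsplit : η ^ (2*s*m.length - (degM m : ℕ))
      = (4 ^ (2*s)) ^ p * v ^ p * η ^ (2*s - (degM m : ℕ)) := by
    have h1 : 2*s*(m.length : ℝ) - (degM m : ℕ) = 2*s*p + (2*s - (degM m : ℕ)) := by
      rw [hp]; push_cast; ring
    rw [h1, Real.rpow_add hη]
    congr 1
    have h2 : η ^ (2*s*(p:ℝ)) = (η ^ (2*s)) ^ (p : ℕ) := by
      rw [← Real.rpow_natCast (η ^ (2*s)) p, ← Real.rpow_mul hη.le]
    rw [h2]
    have h3 : η ^ (2*s) = 4 ^ (2*s) * v := by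
      rw [hv, ← Real.mul_rpow (by norm_num) (by linarith)]
      congr 1
      ring
    rw [h3, mul_pow]
  calc Real.exp (-(DM s 0 0 ξ η)) * |evalMono s m ξ η|
      ≤ Real.exp (-v) * (K * ((4 ^ (2*s)) ^ p * v ^ p * η ^ (2*s - (degM m : ℕ)))) := by
        refine mul_le_mul hexp ?_ (abs_nonneg _) (Real.exp_nonneg _)
        rw [← hsplit]
        exact hKb ξ η h
    _ = K * (4 ^ (2*s)) ^ p * (Real.exp (-v) * v ^ p) * η ^ (2*s - (degM m : ℕ)) := by ring
    _ ≤ K * (4 ^ (2*s)) ^ p * p.factorial * η ^ (2*s - (degM m : ℕ)) := by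
        gcongr
        exact exp_poly_bound p hv0.le



lemma poly_bound (s : ℝ) (hs : 0 < s) (d : ℕ) (P : List (ℝ × List (ℕ × ℕ)))
    (hP : ∀ cm ∈ P, (cm.1 = 1 ∨ cm.1 = -1) ∧ degM cm.2 = d ∧ cm.2 ≠ []) :
    ∃ C > 0, ∀ ξ η : ℝ, Reg ξ η →
      Real.exp (-(DM s 0 0 ξ η)) * |evalPoly s P ξ η| ≤ C * η ^ (2*s - (d : ℕ)) := by
  induction P with
  | nil =>
    refine ⟨1, one_pos, fun ξ η h => ?_⟩
    simp only [evalPoly, List.map_nil, List.sum_nil, abs_zero, mul_zero]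
    rw [one_mul]
    exact Real.rpow_nonneg h.1.le _
  | cons cm P' ih =>
    obtain ⟨hc, hd, hne⟩ := hP cm List.mem_cons_self
    obtain ⟨C1, hC1, hb1⟩ := poly_term_bound s hs cm.2 hne
    obtain ⟨C2, hC2, hb2⟩ := ih fun cm' hcm' => hP cm' (List.mem_cons_of_mem _ hcm')
    refine ⟨C1 + C2, by positivity, fun ξ η h => ?_⟩
    have hsplit : evalPoly s (cm :: P') ξ η = cm.1 * evalMono s cm.2 ξ η + evalPoly s P' ξ η := by
      simp [evalPoly]
    have hc1 : |cm.1| = 1 := by rcases hc with h' | h' <;> simp [h']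
    calc Real.exp (-(DM s 0 0 ξ η)) * |evalPoly s (cm :: P') ξ η|
        ≤ Real.exp (-(DM s 0 0 ξ η)) * (|cm.1 * evalMono s cm.2 ξ η| + |evalPoly s P' ξ η|) := by
          rw [hsplit]
          exact mul_le_mul_of_nonneg_left (abs_add_le _ _) (Real.exp_nonneg _)
      _ = Real.exp (-(DM s 0 0 ξ η)) * |evalMono s cm.2 ξ η|
            + Real.exp (-(DM s 0 0 ξ η)) * |evalPoly s P' ξ η| := by
          rw [abs_mul, hc1]; ring
      _ ≤ C1 * η ^ (2*s - (degM cm.2 : ℕ)) + C2 * η ^ (2*s - (d : ℕ)) :=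
          add_le_add (hb1 ξ η h) (hb2 ξ η h)
      _ = (C1 + C2) * η ^ (2*s - (d : ℕ)) := by rw [hd]; ring




lemma EE_bound (s : ℝ) (hs : 0 < s) (a b : ℕ) (hab : 1 ≤ a + b) :
    ∃ C > 0, ∀ ξ η : ℝ, Reg ξ η → |EE s a b ξ η| ≤ C * η ^ (2*s - ((a+b : ℕ) : ℝ)) := by
  obtain ⟨C, hC, hb⟩ := poly_bound s hs (a+b) (PP a b)
    (fun cm hcm => ⟨(PP_mem a b cm hcm).1, (PP_mem a b cm hcm).2.1, (PP_mem a b cm hcm).2.2 hab⟩)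
  refine ⟨C, hC, fun ξ η h => ?_⟩
  rw [EE, abs_mul, Real.abs_exp]
  exact hb ξ η h

/-- Inner iterated derivative equals the explicit formula. -/
lemma inner_eq (s : ℝ) (m₂ : ℕ) {ξ η : ℝ} (h : Reg ξ η) :
    iteratedDeriv m₂ (fun η' => Real.exp (-(Mker s ξ η'))) η = EE s 0 m₂ ξ η := by
  induction m₂ generalizing η with
  | zero =>
    rw [iteratedDeriv_zero, EE]
    have hPP : evalPoly s (PP 0 0) ξ η = 1 := by
      rw [PP]
      simp [evalPoly, evalMono]
    rw [hPP, Mker_eq_DM s h, mul_one]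
  | succ k ih =>
    rw [iteratedDeriv_succ]
    obtain ⟨ε, hε, hball⟩ := reg_ball_snd h
    have hev : iteratedDeriv k (fun η' => Real.exp (-(Mker s ξ η'))) =ᶠ[𝓝 η]
        fun η' => EE s 0 k ξ η' :=
      eventuallyEq_of_mem (Metric.ball_mem_nhds η hε) (fun η' hη' => ih (hball η' hη'))
    rw [hev.deriv_eq]
    exact (EE_hasDerivAt_snd s k h).deriv

/-- Nested iterated derivative equals the explicit formula. -/
lemma nested_eq (s : ℝ) (m₁ m₂ : ℕ) {η : ℝ} :
    ∀ ξ : ℝ, Reg ξ η →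
    iteratedDeriv m₁ (fun ξ' => iteratedDeriv m₂ (fun η' => Real.exp (-(Mker s ξ' η'))) η) ξ
      = EE s m₁ m₂ ξ η := by
  induction m₁ with
  | zero =>
    intro ξ h
    rw [iteratedDeriv_zero]
    exact inner_eq s m₂ h
  | succ k ih =>
    intro ξ h
    rw [iteratedDeriv_succ]
    obtain ⟨ε, hε, hball⟩ := reg_ball_fst h
    have hev : iteratedDeriv k
        (fun ξ' => iteratedDeriv m₂ (fun η' => Real.exp (-(Mker s ξ' η'))) η) =ᶠ[𝓝 ξ]
        fun ξ' => EE s k m₂ ξ' η :=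
      eventuallyEq_of_mem (Metric.ball_mem_nhds ξ hε) (fun ξ' hξ' => ih ξ' (hball ξ' hξ'))
    rw [hev.deriv_eq]
    exact (EE_hasDerivAt_fst s k m₂ h).deriv

/-- The main estimate, in the region `η > 0`. -/
lemma key (s : ℝ) (hs : 0 < s) (m₁ m₂ : ℕ) (hm : 1 ≤ m₁ + m₂) :
    ∃ C > (0:ℝ), ∀ ξ η : ℝ, 0 < η → |ξ - η| ≤ η / 2 →
      |iteratedDeriv m₁
          (fun ξ' => iteratedDeriv m₂ (fun η' => Real.exp (-(Mker s ξ' η'))) η) ξ|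
        ≤ C * (|ξ| + |η|) ^ (2 * s - m₁ - m₂) := by
  obtain ⟨C₀, hC₀, hb⟩ := EE_bound s hs m₁ m₂ hm
  set e : ℝ := 2*s - ((m₁+m₂ : ℕ) : ℝ) with he
  refine ⟨C₀ * max ((2/5 : ℝ) ^ e) ((2/3 : ℝ) ^ e), by positivity, fun ξ η hη hd => ?_⟩
  have hreg : Reg ξ η := ⟨hη, lt_of_le_of_lt hd (by linarith)⟩
  have habs := abs_le.1 hd
  have hξ : η/2 ≤ ξ := by linarith [habs.1]
  have hξ0 : 0 < ξ := by linarith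
  have hX : |ξ| + |η| = ξ + η := by rw [abs_of_pos hξ0, abs_of_pos hη]
  have hX1 : (2/5) * (ξ + η) ≤ η := by linarith [habs.2]
  have hX2 : η ≤ (2/3) * (ξ + η) := by linarith [habs.1]
  have hXpos : 0 < ξ + η := by linarith
  have hbr : η ^ e ≤ max (((2/5) * (ξ + η)) ^ e) (((2/3) * (ξ + η)) ^ e) :=
    rpow_bracket (by linarith) hX1 hX2
  have hsplit : max (((2/5) * (ξ + η)) ^ e) (((2/3) * (ξ + η)) ^ e)
      = max ((2/5 : ℝ) ^ e) ((2/3 : ℝ) ^ e) * (ξ + η) ^ e := by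
    rw [Real.mul_rpow (by norm_num) hXpos.le, Real.mul_rpow (by norm_num) hXpos.le,
      max_mul_of_nonneg _ _ (Real.rpow_nonneg hXpos.le e)]
  have hexp : 2 * s - (m₁ : ℝ) - m₂ = e := by rw [he]; push_cast; ring
  rw [nested_eq s m₁ m₂ ξ hreg, hexp, hX]
  calc |EE s m₁ m₂ ξ η| ≤ C₀ * η ^ e := hb ξ η hreg
    _ ≤ C₀ * (max ((2/5 : ℝ) ^ e) ((2/3 : ℝ) ^ e) * (ξ + η) ^ e) := by
        rw [← hsplit]
        exact mul_le_mul_of_nonneg_left hbr hC₀.le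
    _ = C₀ * max ((2/5 : ℝ) ^ e) ((2/3 : ℝ) ^ e) * (ξ + η) ^ e := by ring

lemma Mker_neg (s ξ η : ℝ) : Mker s (-ξ) (-η) = Mker s ξ η := by
  unfold Mker
  congr 1
  funext τ
  rw [show (-ξ - -η) * τ + -η = -((ξ - η) * τ + η) by ring, abs_neg]

lemma iteratedDeriv_const_smul'' (n : ℕ) (c : ℝ) (f : ℝ → ℝ) :
    iteratedDeriv n (fun x => c • f x) = fun x => c • iteratedDeriv n f x := by
  induction n with
  | zero => simp
  | succ k ih =>
    funext x
    rw [iteratedDeriv_succ, ih, iteratedDeriv_succ]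
    exact deriv_fun_const_smul_field c _


end Stmt18

theorem stmt18 (s : ℝ) (hs : 0 < s) (hs1 : s < 1) (m₁ m₂ : ℕ) (hm : 1 ≤ m₁ + m₂) :
    ∃ C > (0:ℝ), ∀ ξ η : ℝ, ξ ≠ 0 → η ≠ 0 → |ξ - η| ≤ |η| / 2 →
      |iteratedDeriv m₁
          (fun ξ' => iteratedDeriv m₂ (fun η' => Real.exp (-(Mker s ξ' η'))) η) ξ|
        ≤ C * (|ξ| + |η|) ^ (2 * s - m₁ - m₂) := by
  obtain ⟨C, hC, hb⟩ := Stmt18.key s hs m₁ m₂ hm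
  refine ⟨C, hC, fun ξ η hξ hη hd => ?_⟩
  rcases lt_or_gt_of_ne hη with hneg | hpos
  · -- η < 0 : use the symmetry (ξ,η) ↦ (-ξ,-η)
    set g : ℝ → ℝ := fun x => iteratedDeriv m₂ (fun η'' => Real.exp (-(Mker s x η''))) (-η) with hg
    have hstep1 : (fun ξ' => iteratedDeriv m₂ (fun η' => Real.exp (-(Mker s ξ' η'))) η)
        = fun ξ' => ((-1 : ℝ) ^ m₂) • g (-ξ') := by
      funext ξ'
      have h1 : (fun η' => Real.exp (-(Mker s ξ' η')))
          = fun η' => (fun η'' => Real.exp (-(Mker s (-ξ') η''))) (-η') := by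
        funext η'
        simp only
        rw [Stmt18.Mker_neg]
      rw [h1, iteratedDeriv_comp_neg m₂ (fun η'' => Real.exp (-(Mker s (-ξ') η''))) η]
    rw [hstep1, Stmt18.iteratedDeriv_const_smul'' m₁ ((-1 : ℝ) ^ m₂) (fun ξ' => g (-ξ'))]
    beta_reduce
    rw [iteratedDeriv_comp_neg m₁ g ξ]
    rw [smul_eq_mul, smul_eq_mul, ← mul_assoc, abs_mul, abs_mul, abs_pow, abs_pow, abs_neg,
      abs_one, one_pow, one_pow, one_mul, one_mul]
    have hd' : |(-ξ) - (-η)| ≤ (-η) / 2 := by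
      rw [show (-ξ) - (-η) = -(ξ - η) by ring, abs_neg]
      rwa [abs_of_neg hneg] at hd
    have := hb (-ξ) (-η) (by linarith) hd'
    rwa [abs_neg, abs_neg] at this
  · exact hb ξ η hpos (by rwa [abs_of_pos hpos] at hd)
end
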